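/- arXiv:1402.1869 — 5 statements merged into one kernel-verified Lean document; each statement's English description precedes it below -/
import Mathlib

section
/- Let h̃ : ℝ → ℝ be defined by h̃(x) = max{0, x} + Σ_{i=1}^{p-1} (-1)^i · 2 · max{0, x - i}. Then for every k ∈ {1, ..., p} and every x ∈ [k-1, k], h̃(x) = x - (k-1) if k is odd, and h̃(x) = k - x if k is even. In particular h̃ maps each interval [k-1, k] bijectively onto [0, 1]. -/
/-!
On `[m, m + 1]` the units `max 0 (x - i)` with `i ≤ m` are active and those with `i > m` vanish,
so `sawtooth p` is there the affine function `x + ∑_{i=1}^{m} (-1)^i 2 (x - i)`. Each new term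
flips the slope between `1` and `-1`, and the constant terms make the piece vanish at `m`
(for even `m`) or at `m + 1` (for odd `m`).
-/

/-- The sawtooth function built from rectifier (ReLU) units:
`h̃(x) = max{0,x} + ∑_{i=1}^{p-1} (-1)^i · 2 · max{0, x - i}`. -/
noncomputable def sawtooth (p : ℕ) (x : ℝ) : ℝ :=
  max 0 x + ∑ i ∈ Finset.Icc 1 (p - 1), (-1 : ℝ) ^ i * 2 * max 0 (x - i)

open Finset

lemma add_sum_alternating_linear (m : ℕ) (x : ℝ) :
    x + ∑ i ∈ Icc 1 m, (-1 : ℝ) ^ i * 2 * (x - i) =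
      if Even m then x - m else m + 1 - x := by
  induction m with
  | zero => simp
  | succ n ih =>
    rw [sum_Icc_succ_top (by omega), ← add_assoc, ih]
    rcases Nat.even_or_odd n with hn | hn
    · simp only [hn, hn.add_one.neg_one_pow, if_true, Nat.even_add_one, not_true_eq_false,
        if_false]
      push_cast
      ring
    · simp only [Nat.not_even_iff_odd.mpr hn, hn.add_one, hn.add_one.neg_one_pow, if_true,
        if_false]
      push_cast
      ring

lemma sawtooth_eq_of_mem_Icc {p m : ℕ} (hmp : m < p) {x : ℝ}
    (hx : x ∈ Set.Icc (m : ℝ) (m + 1)) :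
    sawtooth p x = if Even m then x - m else m + 1 - x := by
  obtain ⟨hmx, hxm⟩ := hx
  have inactive :
      ∀ i ∈ Icc 1 (p - 1), i ∉ Icc 1 m → (-1 : ℝ) ^ i * 2 * max 0 (x - i) = 0 := by
    intro i hip hi
    have : (m : ℝ) + 1 ≤ i := by
      exact_mod_cast (show m + 1 ≤ i by rw [mem_Icc] at hip hi; omega)
    rw [max_eq_left (by linarith), mul_zero]
  have active :
      ∀ i ∈ Icc 1 m, (-1 : ℝ) ^ i * 2 * max 0 (x - i) = (-1 : ℝ) ^ i * 2 * (x - i) := by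
    intro i hi
    have : (i : ℝ) ≤ m := by exact_mod_cast (mem_Icc.mp hi).2
    rw [max_eq_right (by linarith)]
  rw [sawtooth, max_eq_right (by linarith [m.cast_nonneg (α := ℝ)]),
    ← sum_subset (Icc_subset_Icc_right (by omega)) inactive, sum_congr rfl active,
    add_sum_alternating_linear]

lemma bijOn_sub_const_Icc (a : ℝ) :
    Set.BijOn (fun x => x - a) (Set.Icc a (a + 1)) (Set.Icc 0 1) := by
  convert sub_left_injective.injOn.bijOn_image using 1
  rw [Set.image_sub_const_Icc]
  simp

lemma bijOn_const_sub_Icc (a : ℝ) :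
    Set.BijOn (fun x => a + 1 - x) (Set.Icc a (a + 1)) (Set.Icc 0 1) := by
  convert sub_right_injective.injOn.bijOn_image using 1
  rw [Set.image_const_sub_Icc]
  simp

theorem sawtooth_piece_general (p : ℕ) (k : ℕ) (hk : 1 ≤ k) (hkp : k ≤ p) :
    (∀ x ∈ Set.Icc ((k : ℝ) - 1) (k : ℝ),
      sawtooth p x = if Odd k then x - ((k : ℝ) - 1) else (k : ℝ) - x) ∧
    Set.BijOn (sawtooth p) (Set.Icc ((k : ℝ) - 1) (k : ℝ)) (Set.Icc (0 : ℝ) 1) := by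
  obtain ⟨m, rfl⟩ : ∃ m, k = m + 1 := ⟨k - 1, by omega⟩
  have hmp : m < p := by omega
  simp only [Nat.cast_add, Nat.cast_one, add_sub_cancel_right, Nat.odd_add_one,
    Nat.not_odd_iff_even]
  refine ⟨fun x hx => sawtooth_eq_of_mem_Icc hmp hx, ?_⟩
  by_cases hm : Even m
  · exact (bijOn_sub_const_Icc m).congr fun x hx => by
      rw [sawtooth_eq_of_mem_Icc hmp hx, if_pos hm]
  · exact (bijOn_const_sub_Icc m).congr fun x hx => by
      rw [sawtooth_eq_of_mem_Icc hmp hx, if_neg hm]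

theorem sawtooth_piece (p : ℕ) (hp : 1 ≤ p) (k : ℕ) (hk : 1 ≤ k) (hkp : k ≤ p) :
    (∀ x ∈ Set.Icc ((k : ℝ) - 1) (k : ℝ),
      sawtooth p x = if Odd k then x - ((k : ℝ) - 1) else (k : ℝ) - x) ∧
    Set.BijOn (sawtooth p) (Set.Icc ((k : ℝ) - 1) (k : ℝ)) (Set.Icc (0 : ℝ) 1) :=
  sawtooth_piece_general p k hk hkp
end

section
/- An arrangement of m hyperplanes in ℝⁿ has at most Σ_{j=0}^{n} C(m, j) regions, where a region is a connected component of the complement of the union of the hyperplanes; equality holds when the hyperplanes are in general position. -/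
/-!
For a sign vector `σ`, the cell cut out by `b i < f i x` or `f i x < b i`, according to `σ i`, is
open and convex, and the cells partition the complement of the hyperplanes `f i = b i`. A cell is
connected (being convex) and relatively clopen in the complement (its closure meets no other
cell), so the regions are exactly the nonempty cells, counted by the realizable sign vectors.

Delete the last hyperplane `H`. If the normal of `H` is nonzero, each region of the smaller
arrangement contains one or two regions of the full one, two exactly when `H` meets it; the
regions met by `H` are the regions of the arrangement induced on `H`, one dimension lower.
So `r(m, n) ≤ r(m - 1, n) + r(m - 1, n - 1)`, with equality in general position, which both
smaller arrangements inherit, and Pascal's rule for `∑_{j ≤ n} C(m, j)` closes the induction.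
-/

open Finset

/-- The hyperplane `{x : ℝⁿ | ⟨w, x⟩ = b}`. -/
def Hyperplane {n : ℕ} (w : Fin n → ℝ) (b : ℝ) : Set (Fin n → ℝ) :=
  {x | (∑ i, w i * x i) = b}

/-- The set of regions of the arrangement: connected components of the complement
of the union of the hyperplanes. -/
def ArrRegions {n m : ℕ} (w : Fin m → Fin n → ℝ) (b : Fin m → ℝ) : Set (Set (Fin n → ℝ)) :=
  {C | ∃ x ∈ (⋃ i, Hyperplane (w i) (b i))ᶜ,
        C = connectedComponentIn (⋃ i, Hyperplane (w i) (b i))ᶜ x}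

/-- The hyperplanes are in general position: any at most `n` of them have linearly
independent normals and a common point, and any more than `n` of them have empty
intersection. -/
def GeneralPosition {n m : ℕ} (w : Fin m → Fin n → ℝ) (b : Fin m → ℝ) : Prop :=
  (∀ S : Finset (Fin m), S.card ≤ n →
      LinearIndependent ℝ (fun i : S => w i) ∧ (⋂ i ∈ S, Hyperplane (w i) (b i)).Nonempty) ∧
  (∀ S : Finset (Fin m), n < S.card → (⋂ i ∈ S, Hyperplane (w i) (b i)) = ∅)

lemma ker_dualRestrict_ker {K V : Type*} [Field K] [AddCommGroup V] [Module K V]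
    (φ : Module.Dual K V) : LinearMap.ker (LinearMap.ker φ).dualRestrict = K ∙ φ := by
  rw [Submodule.dualRestrict_ker_eq_dualAnnihilator,
    ← LinearMap.range_dualMap_eq_dualAnnihilator_ker, LinearMap.range_dualMap_dual_eq_span_singleton]

lemma LinearIndepOn.dualRestrict_ker {K V ι : Type*} [Field K] [AddCommGroup V] [Module K V]
    {g : ι → Module.Dual K V} {s : Set ι} {a : ι} (ha : a ∉ s)
    (h : LinearIndepOn K g (insert a s)) :
    LinearIndepOn K ((LinearMap.ker (g a)).dualRestrict ∘ g) s := by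
  rw [linearIndepOn_insert ha] at h
  refine LinearIndependent.map h.1 ?_
  rw [ker_dualRestrict_ker, Submodule.disjoint_span_singleton, ← Set.image_eq_range]
  exact fun hmem => absurd hmem h.2

lemma Convex.exists_apply_eq_of_mem_uIcc {V : Type*} [AddCommGroup V] [Module ℝ V] {C : Set V}
    (hC : Convex ℝ C) (φ : V →ₗ[ℝ] ℝ) {x y : V} (hx : x ∈ C) (hy : y ∈ C) {β : ℝ}
    (hβ : β ∈ Set.uIcc (φ x) (φ y)) : ∃ z ∈ C, φ z = β := by
  rw [← segment_eq_uIcc, ← φ.coe_toAffineMap, ← image_segment] at hβ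
  obtain ⟨z, hz, rfl⟩ := hβ
  exact ⟨z, hC.segment_subset hx hy hz, rfl⟩

namespace HyperplaneArrangement

open Set Filter Topology Module

section Cells

variable {V : Type*} [AddCommGroup V] [Module ℝ V] {m : ℕ}

def halfSpace (φ : V →ₗ[ℝ] ℝ) (β : ℝ) : Bool → Set V
  | true => {x | β < φ x}
  | false => {x | φ x < β}

def cell (f : Fin m → V →ₗ[ℝ] ℝ) (b : Fin m → ℝ) (σ : Fin m → Bool) : Set V :=
  ⋂ i, halfSpace (f i) (b i) (σ i)

def signs (f : Fin m → V →ₗ[ℝ] ℝ) (b : Fin m → ℝ) : Set (Fin m → Bool) :=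
  {σ | (cell f b σ).Nonempty}

variable {φ : V →ₗ[ℝ] ℝ} {β : ℝ} {x : V}

lemma convex_halfSpace (φ : V →ₗ[ℝ] ℝ) (β : ℝ) (s : Bool) : Convex ℝ (halfSpace φ β s) := by
  cases s
  exacts [convex_halfSpace_lt φ.isLinear β, convex_halfSpace_gt φ.isLinear β]

lemma apply_ne_of_mem_halfSpace {s : Bool} (hx : x ∈ halfSpace φ β s) : φ x ≠ β := by
  cases s
  exacts [ne_of_lt hx, ne_of_gt hx]

lemma mem_halfSpace_decide (hx : φ x ≠ β) : x ∈ halfSpace φ β (decide (β < φ x)) := by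
  rcases hx.lt_or_gt with h | h
  · rw [decide_eq_false (not_lt_of_gt h)]
    exact h
  · rw [decide_eq_true h]
    exact h

lemma eq_of_mem_halfSpace {s t : Bool} (hs : x ∈ halfSpace φ β s) (ht : x ∈ halfSpace φ β t) :
    s = t := by
  cases s <;> cases t <;> simp only [halfSpace, mem_ofPred_eq] at hs ht <;> first | rfl | linarith

lemma eventually_add_smul_mem_halfSpace {s : Bool} (hx : x ∈ halfSpace φ β s) (v : V) :
    ∀ᶠ ε in 𝓝 (0 : ℝ), x + ε • v ∈ halfSpace φ β s := by
  have hcont : Tendsto (fun ε : ℝ => φ x + ε * φ v) (𝓝 0) (𝓝 (φ x)) :=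
    (by fun_prop : Continuous fun ε : ℝ => φ x + ε * φ v).tendsto' 0 (φ x) (by simp)
  cases s
  · simpa [halfSpace] using hcont.eventually_lt_const hx
  · simpa [halfSpace] using hcont.eventually_const_lt hx

lemma convex_cell (f : Fin m → V →ₗ[ℝ] ℝ) (b : Fin m → ℝ) (σ : Fin m → Bool) :
    Convex ℝ (cell f b σ) :=
  convex_iInter fun _ => convex_halfSpace _ _ _

lemma eq_of_mem_cell {f : Fin m → V →ₗ[ℝ] ℝ} {b : Fin m → ℝ} {σ τ : Fin m → Bool}
    (hσ : x ∈ cell f b σ) (hτ : x ∈ cell f b τ) : σ = τ :=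
  funext fun i => eq_of_mem_halfSpace (mem_iInter.1 hσ i) (mem_iInter.1 hτ i)

lemma iUnion_cell (f : Fin m → V →ₗ[ℝ] ℝ) (b : Fin m → ℝ) :
    ⋃ σ, cell f b σ = {x | ∀ i, f i x ≠ b i} := by
  ext x
  simp only [mem_iUnion, mem_ofPred_eq]
  constructor
  · rintro ⟨σ, hx⟩ i
    exact apply_ne_of_mem_halfSpace (mem_iInter.1 hx i)
  · exact fun hx => ⟨_, mem_iInter.2 fun i => mem_halfSpace_decide (hx i)⟩

lemma eventually_add_smul_mem_cell {f : Fin m → V →ₗ[ℝ] ℝ} {b : Fin m → ℝ} {σ : Fin m → Bool}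
    (hx : x ∈ cell f b σ) (v : V) : ∀ᶠ ε in 𝓝 (0 : ℝ), x + ε • v ∈ cell f b σ := by
  simp only [cell, mem_iInter, eventually_all]
  exact fun i => eventually_add_smul_mem_halfSpace (mem_iInter.1 hx i) v

lemma exists_mem_cell_inter_halfSpace {f : Fin m → V →ₗ[ℝ] ℝ} {b : Fin m → ℝ}
    {σ : Fin m → Bool} (hx : x ∈ cell f b σ) (hφ : φ ≠ 0) (s : Bool) :
    ∃ y ∈ cell f b σ, y ∈ halfSpace φ (φ x) s := by
  obtain ⟨v, hv⟩ := φ.surjective hφ (if s then 1 else -1)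
  obtain ⟨ε, hε, hεpos⟩ := (((eventually_add_smul_mem_cell hx v).filter_mono
    nhdsWithin_le_nhds).and self_mem_nhdsWithin).exists (f := 𝓝[>] (0 : ℝ))
  have hεpos : 0 < ε := hεpos
  refine ⟨x + ε • v, hε, ?_⟩
  cases s <;> simp only [halfSpace, mem_ofPred_eq, map_add, map_smul, hv] <;> simp <;> linarith

section DeletionRestriction

variable (f : Fin (m + 1) → V →ₗ[ℝ] ℝ) (b : Fin (m + 1) → ℝ)

def signsWithLast (s : Bool) : Set (Fin m → Bool) :=
  {τ | Fin.snoc τ s ∈ signs f b}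

def cutSigns : Set (Fin m → Bool) :=
  {τ | (cell (Fin.init f) (Fin.init b) τ ∩ {x | f (Fin.last m) x = b (Fin.last m)}).Nonempty}

lemma cell_snoc (τ : Fin m → Bool) (s : Bool) :
    cell f b (Fin.snoc τ s) =
      cell (Fin.init f) (Fin.init b) τ ∩ halfSpace (f (Fin.last m)) (b (Fin.last m)) s := by
  ext x
  simp only [cell, mem_iInter, mem_inter_iff, Fin.forall_fin_succ', Fin.snoc_castSucc,
    Fin.snoc_last, Fin.init]

lemma signs_succ_eq_union :
    signs f b = (Fin.snoc · true) '' signsWithLast f b true ∪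
      (Fin.snoc · false) '' signsWithLast f b false := by
  ext σ
  rw [← Fin.snoc_init_self σ]
  cases σ (Fin.last m) <;>
    simp [signsWithLast, Fin.snoc_injective2.eq_iff]

lemma ncard_signs_succ :
    (signs f b).ncard = (signsWithLast f b true ∪ signsWithLast f b false).ncard +
      (signsWithLast f b true ∩ signsWithLast f b false).ncard := by
  rw [ncard_union_add_ncard_inter, signs_succ_eq_union, ncard_union_eq,
    ncard_image_of_injective _ (Fin.snoc_left_injective (α := fun _ => Bool) _),
    ncard_image_of_injective _ (Fin.snoc_left_injective (α := fun _ => Bool) _)]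
  refine disjoint_left.2 ?_
  rintro _ ⟨τ, -, rfl⟩ ⟨τ', -, h⟩
  simpa using congrFun h (Fin.last m)

lemma signsWithLast_subset (s : Bool) :
    signsWithLast f b s ⊆ signs (Fin.init f) (Fin.init b) := fun τ ⟨x, hx⟩ => by
  rw [cell_snoc] at hx
  exact ⟨x, hx.1⟩

lemma inter_signsWithLast_subset_cutSigns :
    signsWithLast f b true ∩ signsWithLast f b false ⊆ cutSigns f b := by
  rintro τ ⟨⟨x, hx⟩, ⟨y, hy⟩⟩
  rw [cell_snoc] at hx hy
  exact (convex_cell _ _ τ).exists_apply_eq_of_mem_uIcc _ hx.1 hy.1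
    (mem_uIcc.2 (Or.inr ⟨le_of_lt hy.2, le_of_lt hx.2⟩))

lemma inter_signsWithLast_eq_empty (hf : f (Fin.last m) = 0) :
    signsWithLast f b true ∩ signsWithLast f b false = ∅ := by
  refine eq_empty_of_forall_notMem ?_
  rintro τ ⟨⟨x, hx⟩, ⟨y, hy⟩⟩
  rw [cell_snoc] at hx hy
  have hx' : b (Fin.last m) < 0 := by simpa [halfSpace, hf] using hx.2
  have hy' : 0 < b (Fin.last m) := by simpa [halfSpace, hf] using hy.2
  linarith

lemma signs_diff_cutSigns_subset :
    signs (Fin.init f) (Fin.init b) \ cutSigns f b ⊆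
      signsWithLast f b true ∪ signsWithLast f b false := by
  rintro τ ⟨⟨x, hx⟩, hcut⟩
  have hne : f (Fin.last m) x ≠ b (Fin.last m) := fun h => hcut ⟨x, hx, h⟩
  rcases hne.lt_or_gt with h | h
  · exact Or.inr ⟨x, by rw [cell_snoc]; exact ⟨hx, h⟩⟩
  · exact Or.inl ⟨x, by rw [cell_snoc]; exact ⟨hx, h⟩⟩

lemma cutSigns_subset_inter (hf : f (Fin.last m) ≠ 0) :
    cutSigns f b ⊆ signsWithLast f b true ∩ signsWithLast f b false := by
  rintro τ ⟨z, hz, hzf : f (Fin.last m) z = b (Fin.last m)⟩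
  have hside (s : Bool) : τ ∈ signsWithLast f b s := by
    obtain ⟨x, hx, hxs⟩ := exists_mem_cell_inter_halfSpace hz hf s
    exact ⟨x, by rw [cell_snoc]; exact ⟨hx, hzf ▸ hxs⟩⟩
  exact ⟨hside true, hside false⟩

lemma ncard_signs_le :
    (signs f b).ncard ≤ (signs (Fin.init f) (Fin.init b)).ncard + (cutSigns f b).ncard := by
  rw [ncard_signs_succ]
  exact add_le_add
    (ncard_le_ncard (union_subset (signsWithLast_subset f b true) (signsWithLast_subset f b false)))
    (ncard_le_ncard (inter_signsWithLast_subset_cutSigns f b))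

lemma ncard_signs_le_of_last_eq_zero (hf : f (Fin.last m) = 0) :
    (signs f b).ncard ≤ (signs (Fin.init f) (Fin.init b)).ncard := by
  rw [ncard_signs_succ, inter_signsWithLast_eq_empty f b hf, ncard_empty, add_zero]
  exact ncard_le_ncard (union_subset (signsWithLast_subset f b true)
    (signsWithLast_subset f b false))

lemma ncard_signs_eq (h : cutSigns f b ⊆ signsWithLast f b true ∩ signsWithLast f b false) :
    (signs f b).ncard = (signs (Fin.init f) (Fin.init b)).ncard + (cutSigns f b).ncard := by
  have hunion : signsWithLast f b true ∪ signsWithLast f b false =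
      signs (Fin.init f) (Fin.init b) := by
    refine (union_subset (signsWithLast_subset f b true) (signsWithLast_subset f b false)).antisymm
      fun τ hτ => ?_
    by_cases hcut : τ ∈ cutSigns f b
    · exact mem_union_left _ (h hcut).1
    · exact signs_diff_cutSigns_subset f b ⟨hτ, hcut⟩
  rw [ncard_signs_succ, hunion, (inter_signsWithLast_subset_cutSigns f b).antisymm h]

end DeletionRestriction

-- The arrangement induced on the affine subspace `x₀ + K`, in the coordinate `u ↦ x₀ + u`.
lemma cell_dualRestrict (K : Submodule ℝ V) (x₀ : V) (f : Fin m → V →ₗ[ℝ] ℝ) (b : Fin m → ℝ)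
    (σ : Fin m → Bool) :
    cell (K.dualRestrict ∘ f) (fun i => b i - f i x₀) σ = (fun u : K => x₀ + u) ⁻¹' cell f b σ := by
  ext u
  simp only [cell, mem_iInter, Set.mem_preimage]
  refine forall_congr' fun i => ?_
  cases σ i <;>
    simp [halfSpace, Submodule.dualRestrict_apply, sub_lt_iff_lt_add', lt_sub_iff_add_lt']

lemma cutSigns_eq_signs_dualRestrict (f : Fin (m + 1) → V →ₗ[ℝ] ℝ) (b : Fin (m + 1) → ℝ) {x₀ : V}
    (hx₀ : f (Fin.last m) x₀ = b (Fin.last m)) :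
    cutSigns f b = signs ((LinearMap.ker (f (Fin.last m))).dualRestrict ∘ Fin.init f)
      (fun i => Fin.init b i - Fin.init f i x₀) := by
  ext τ
  simp only [cutSigns, signs, mem_ofPred_eq, cell_dualRestrict]
  constructor
  · rintro ⟨z, hz, hzf⟩
    exact ⟨⟨z - x₀, by simp_all⟩, by simpa using hz⟩
  · rintro ⟨u, hu⟩
    exact ⟨x₀ + u, hu, by simp [hx₀, LinearMap.mem_ker.1 u.2]⟩

lemma ncard_image_cell (f : Fin m → V →ₗ[ℝ] ℝ) (b : Fin m → ℝ) :
    (cell f b '' signs f b).ncard = (signs f b).ncard :=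
  InjOn.ncard_image fun _ ⟨_, hx⟩ _ _ h => eq_of_mem_cell hx (h ▸ hx)

end Cells

section Topology

variable {V : Type*} [NormedAddCommGroup V] [NormedSpace ℝ V] [FiniteDimensional ℝ V] {m : ℕ}

lemma isOpen_halfSpace (φ : V →ₗ[ℝ] ℝ) (β : ℝ) (s : Bool) : IsOpen (halfSpace φ β s) := by
  have hφ := φ.continuous_of_finiteDimensional
  cases s
  exacts [isOpen_lt hφ continuous_const, isOpen_lt continuous_const hφ]

lemma closure_halfSpace_inter_subset (φ : V →ₗ[ℝ] ℝ) (β : ℝ) (s t : Bool) :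
    closure (halfSpace φ β s) ∩ halfSpace φ β t ⊆ halfSpace φ β s := by
  rintro x ⟨hxs, hxt⟩
  obtain rfl | hst := eq_or_ne s t
  · exact hxt
  · obtain ⟨y, hys, hyt⟩ :=
      (closure_inter_open_nonempty_iff (isOpen_halfSpace φ β t)).1 ⟨x, hxs, hxt⟩
    exact absurd (eq_of_mem_halfSpace hys hyt) hst

lemma isOpen_cell (f : Fin m → V →ₗ[ℝ] ℝ) (b : Fin m → ℝ) (σ : Fin m → Bool) :
    IsOpen (cell f b σ) :=
  isOpen_iInter_of_finite fun _ => isOpen_halfSpace _ _ _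

lemma closure_cell_inter_subset (f : Fin m → V →ₗ[ℝ] ℝ) (b : Fin m → ℝ) (σ τ : Fin m → Bool) :
    closure (cell f b σ) ∩ cell f b τ ⊆ cell f b σ := fun _ ⟨hxσ, hxτ⟩ =>
  mem_iInter.2 fun i => closure_halfSpace_inter_subset (f i) (b i) (σ i) (τ i)
    ⟨closure_mono (iInter_subset _ i) hxσ, mem_iInter.1 hxτ i⟩

lemma connectedComponentIn_iUnion_cell {f : Fin m → V →ₗ[ℝ] ℝ} {b : Fin m → ℝ}
    {σ : Fin m → Bool} {x : V} (hx : x ∈ cell f b σ) :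
    connectedComponentIn (⋃ τ, cell f b τ) x = cell f b σ := by
  refine subset_antisymm ?_
    ((convex_cell f b σ).isPreconnected.subset_connectedComponentIn hx (subset_iUnion _ σ))
  refine isPreconnected_connectedComponentIn.subset_of_closure_inter_subset (isOpen_cell f b σ)
    ⟨x, mem_connectedComponentIn (mem_iUnion_of_mem σ hx), hx⟩ ?_
  rintro y ⟨hyσ, hyC⟩
  obtain ⟨τ, hyτ⟩ := mem_iUnion.1 (connectedComponentIn_subset _ _ hyC)
  exact closure_cell_inter_subset f b σ τ ⟨hyσ, hyτ⟩

lemma setOf_connectedComponentIn_iUnion_cell (f : Fin m → V →ₗ[ℝ] ℝ) (b : Fin m → ℝ) :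
    {C | ∃ x ∈ ⋃ σ, cell f b σ, C = connectedComponentIn (⋃ σ, cell f b σ) x} =
      cell f b '' signs f b := by
  ext C
  constructor
  · rintro ⟨x, hx, rfl⟩
    obtain ⟨σ, hσ⟩ := mem_iUnion.1 hx
    exact ⟨σ, ⟨x, hσ⟩, (connectedComponentIn_iUnion_cell hσ).symm⟩
  · rintro ⟨σ, ⟨x, hx⟩, rfl⟩
    exact ⟨x, mem_iUnion_of_mem σ hx, (connectedComponentIn_iUnion_cell hx).symm⟩

end Topology

lemma sum_range_choose_succ_succ (m n : ℕ) :
    ∑ j ∈ range (n + 2), (m + 1).choose j =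
      ∑ j ∈ range (n + 2), m.choose j + ∑ j ∈ range (n + 1), m.choose j := by
  rw [sum_range_succ' (fun j => (m + 1).choose j), sum_range_succ' (fun j => m.choose j)]
  simp only [Nat.choose_succ_succ, Nat.choose_zero_right, sum_add_distrib]
  ring

theorem ncard_signs_le_sum_choose {V : Type*} [AddCommGroup V] [Module ℝ V] [FiniteDimensional ℝ V]
    {m n : ℕ} (f : Fin m → V →ₗ[ℝ] ℝ) (b : Fin m → ℝ) (hV : finrank ℝ V ≤ n) :
    (signs f b).ncard ≤ ∑ j ∈ range (n + 1), m.choose j := by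
  induction m generalizing V n with
  | zero => simpa [sum_range_succ'] using ncard_le_one_of_subsingleton (signs f b)
  | succ m ih =>
    by_cases hf : f (Fin.last m) = 0
    · calc (signs f b).ncard ≤ (signs (Fin.init f) (Fin.init b)).ncard :=
            ncard_signs_le_of_last_eq_zero f b hf
        _ ≤ ∑ j ∈ range (n + 1), m.choose j := ih _ _ hV
        _ ≤ ∑ j ∈ range (n + 1), (m + 1).choose j :=
            sum_le_sum fun j _ => Nat.choose_le_choose j m.le_succ
    · obtain ⟨x₀, hx₀⟩ := (f (Fin.last m)).surjective hf (b (Fin.last m))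
      have hrank := Module.Dual.finrank_ker_add_one_of_ne_zero hf
      obtain ⟨n, rfl⟩ : ∃ k, n = k + 1 := ⟨n - 1, by omega⟩
      calc (signs f b).ncard
          ≤ (signs (Fin.init f) (Fin.init b)).ncard + (cutSigns f b).ncard := ncard_signs_le f b
        _ ≤ ∑ j ∈ range (n + 2), m.choose j + ∑ j ∈ range (n + 1), m.choose j := by
            rw [cutSigns_eq_signs_dualRestrict f b hx₀]
            exact add_le_add (ih _ _ hV) (ih _ _ (by omega))
        _ = ∑ j ∈ range (n + 1 + 1), (m + 1).choose j := (sum_range_choose_succ_succ m n).symm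

def InGeneralPosition {V : Type*} [AddCommGroup V] [Module ℝ V] {m : ℕ} (n : ℕ)
    (f : Fin m → V →ₗ[ℝ] ℝ) (b : Fin m → ℝ) : Prop :=
  (∀ S : Finset (Fin m), #S ≤ n → LinearIndepOn ℝ f S ∧ ∃ x, ∀ i ∈ S, f i x = b i) ∧
  (∀ S : Finset (Fin m), n < #S → ∀ x, ∃ i ∈ S, f i x ≠ b i)

section GeneralPosition

variable {V : Type*} [AddCommGroup V] [Module ℝ V] {m n : ℕ}
  {f : Fin (m + 1) → V →ₗ[ℝ] ℝ} {b : Fin (m + 1) → ℝ}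

lemma InGeneralPosition.init (h : InGeneralPosition n f b) :
    InGeneralPosition n (Fin.init f) (Fin.init b) := by
  refine ⟨fun S hS => ?_, fun S hS x => ?_⟩
  · obtain ⟨hli, x, hx⟩ := h.1 (S.map Fin.castSuccEmb) (by simpa using hS)
    refine ⟨?_, x, fun i hi => hx _ (mem_map_of_mem _ hi)⟩
    rw [coe_map] at hli
    exact hli.comp_of_image (Fin.castSucc_injective m).injOn
  · obtain ⟨j, hj, hne⟩ := h.2 (S.map Fin.castSuccEmb) (by simpa using hS) x
    obtain ⟨i, hi, rfl⟩ := mem_map.1 hj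
    exact ⟨i, hi, hne⟩

lemma InGeneralPosition.dualRestrict (h : InGeneralPosition (n + 1) f b) {x₀ : V}
    (hx₀ : f (Fin.last m) x₀ = b (Fin.last m)) :
    InGeneralPosition n ((LinearMap.ker (f (Fin.last m))).dualRestrict ∘ Fin.init f)
      (fun i => Fin.init b i - Fin.init f i x₀) := by
  have hlast (S : Finset (Fin m)) : Fin.last m ∉ S.map Fin.castSuccEmb := by
    simp [Fin.castSucc_ne_last]
  have hcard (S : Finset (Fin m)) : #(insert (Fin.last m) (S.map Fin.castSuccEmb)) = #S + 1 := by
    rw [card_insert_of_notMem (hlast S), card_map]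
  refine ⟨fun S hS => ?_, fun S hS u => ?_⟩
  · obtain ⟨hli, x, hx⟩ :=
      h.1 (insert (Fin.last m) (S.map Fin.castSuccEmb)) (by rw [hcard]; omega)
    rw [coe_insert, coe_map] at hli
    refine ⟨(hli.dualRestrict_ker (by simp)).comp_of_image
      (Fin.castSucc_injective m).injOn, ⟨x - x₀, ?_⟩, fun i hi => ?_⟩
    · simp [hx _ (mem_insert_self _ _), hx₀]
    · simpa [Fin.init] using hx _ (mem_insert_of_mem (mem_map_of_mem _ hi))
  · obtain ⟨j, hj, hne⟩ :=
      h.2 (insert (Fin.last m) (S.map Fin.castSuccEmb)) (by rw [hcard]; omega) (x₀ + u)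
    rcases mem_insert.1 hj with rfl | hj
    · simp [hx₀, LinearMap.mem_ker.1 u.2] at hne
    · obtain ⟨i, hi, rfl⟩ := mem_map.1 hj
      refine ⟨i, hi, fun heq => hne ?_⟩
      simp only [Function.comp_apply, Submodule.dualRestrict_apply, Fin.init] at heq
      simp [heq]

end GeneralPosition

theorem ncard_signs_eq_sum_choose {V : Type*} [AddCommGroup V] [Module ℝ V]
    [FiniteDimensional ℝ V] {m n : ℕ} (f : Fin m → V →ₗ[ℝ] ℝ) (b : Fin m → ℝ)
    (hV : finrank ℝ V = n) (h : InGeneralPosition n f b) :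
    (signs f b).ncard = ∑ j ∈ range (n + 1), m.choose j := by
  induction m generalizing V n with
  | zero =>
    have : signs f b = univ := eq_univ_of_forall fun σ => ⟨0, by simp [cell]⟩
    simp [this, sum_range_succ']
  | succ m ih =>
    cases n with
    | zero =>
      have hcut : cutSigns f b = ∅ := by
        refine eq_empty_of_forall_notMem fun τ ⟨x, _, hx⟩ => ?_
        obtain ⟨i, hi, hne⟩ := h.2 {Fin.last m} (by simp) x
        rw [Finset.mem_singleton] at hi
        exact hne (hi ▸ hx)
      rw [ncard_signs_eq f b (hcut ▸ empty_subset _), hcut, ncard_empty, ih _ _ hV h.init]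
      simp
    | succ n =>
      have hf : f (Fin.last m) ≠ 0 := (h.1 {Fin.last m} (by simp)).1.ne_zero (by simp)
      obtain ⟨x₀, hx₀⟩ := (f (Fin.last m)).surjective hf (b (Fin.last m))
      have hrank := Module.Dual.finrank_ker_add_one_of_ne_zero hf
      rw [ncard_signs_eq f b (cutSigns_subset_inter f b hf), cutSigns_eq_signs_dualRestrict f b hx₀,
        ih _ _ hV h.init, ih _ _ (by omega) (h.dualRestrict hx₀), sum_range_choose_succ_succ]

end HyperplaneArrangement

open HyperplaneArrangement

lemma GeneralPosition.inGeneralPosition_dotProduct {n m : ℕ} {w : Fin m → Fin n → ℝ}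
    {b : Fin m → ℝ} (h : GeneralPosition w b) :
    InGeneralPosition n (fun i => dotProductEquiv ℝ (Fin n) (w i)) b := by
  refine ⟨fun S hS => ?_, fun S hS x => ?_⟩
  · obtain ⟨hli, x, hx⟩ := h.1 S hS
    exact ⟨hli.map' _ (dotProductEquiv ℝ (Fin n)).ker, x, fun i hi => Set.mem_iInter₂.1 hx i hi⟩
  · by_contra! hall
    have hx : x ∈ ⋂ i ∈ S, Hyperplane (w i) (b i) := Set.mem_iInter₂.2 hall
    rw [h.2 S hS] at hx
    exact hx

theorem zaslavsky_bound_general {n m : ℕ} (w : Fin m → Fin n → ℝ) (b : Fin m → ℝ) :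
    ((ArrRegions w b).Finite ∧
      (ArrRegions w b).ncard ≤ ∑ j ∈ range (n + 1), m.choose j) ∧
    (GeneralPosition w b →
      (ArrRegions w b).ncard = ∑ j ∈ range (n + 1), m.choose j) := by
  set f : Fin m → (Fin n → ℝ) →ₗ[ℝ] ℝ := fun i => dotProductEquiv ℝ (Fin n) (w i)
  have hcompl : (⋃ i, Hyperplane (w i) (b i))ᶜ = ⋃ σ, cell f b σ := by
    rw [iUnion_cell]
    ext x
    simp [Hyperplane, f, dotProduct]
  have hregions : ArrRegions w b = cell f b '' signs f b := by
    rw [ArrRegions, hcompl, setOf_connectedComponentIn_iUnion_cell]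
  have hrank : Module.finrank ℝ (Fin n → ℝ) = n := by simp
  rw [hregions, ncard_image_cell]
  exact ⟨⟨(Set.toFinite _).image _, ncard_signs_le_sum_choose f b hrank.le⟩,
    fun hgp => ncard_signs_eq_sum_choose f b hrank hgp.inGeneralPosition_dotProduct⟩

/-- Zaslavsky's bound: an arrangement of `m` hyperplanes in `ℝⁿ` has at most
`∑_{j=0}^n C(m,j)` regions, with equality when the hyperplanes are in general position. -/
theorem zaslavsky_bound {n m : ℕ} (w : Fin m → Fin n → ℝ) (b : Fin m → ℝ)
    (hw : ∀ i, w i ≠ 0) :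
    ((ArrRegions w b).Finite ∧
      (ArrRegions w b).ncard ≤ ∑ j ∈ range (n + 1), m.choose j) ∧
    (GeneralPosition w b →
      (ArrRegions w b).ncard = ∑ j ∈ range (n + 1), m.choose j) :=
  zaslavsky_bound_general w b
end

section
/- A single maxout layer with n inputs and m rank-k maxout units computes functions with at most min{ Σ_{j=0}^{n} C(k²m, j), k^m } linear regions. -/
/-!
On each set where a fixed choice of arguments attains the maximum of every unit, and hence on each
cell cut out by the signs of the `k²m` differences `f j a - f j b`, the layer is affine; both
families of pieces are convex and cover `ℝⁿ`. A linear region meets the interior of some piece,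
and by maximality then contains it, so regions inject into nonempty pieces. This gives `k ^ m`
directly. For the cells, the realised sign patterns of `N` affine functions on `ℝⁿ` shatter no
set of `n + 1` functions (a linear relation `∑ c l • (g l).linear = 0` forbids the patterns
`{c > 0}` and `{c < 0}` from both occurring), so Sauer–Shelah bounds them by `∑_{j ≤ n} C(N, j)`.
-/

open Finset

/-- `F` agrees with an affine map on the set `R`. -/
def AffineOn {n m : ℕ} (F : (Fin n → ℝ) → (Fin m → ℝ)) (R : Set (Fin n → ℝ)) : Prop :=
  ∃ (A : (Fin n → ℝ) →ₗ[ℝ] (Fin m → ℝ)) (c : Fin m → ℝ), ∀ x ∈ R, F x = A x + c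

/-- A linear region of `F`: a maximal connected open set on which `F` is affine. -/
def IsLinearRegion {n m : ℕ} (F : (Fin n → ℝ) → (Fin m → ℝ)) (R : Set (Fin n → ℝ)) : Prop :=
  IsOpen R ∧ IsConnected R ∧ AffineOn F R ∧
    ∀ R', R ⊆ R' → IsOpen R' → IsConnected R' → AffineOn F R' → R' = R

/-- The function computed by a maxout layer with `m` rank-`k` units: unit `j` outputs the
maximum of its `k` affine pre-activations. -/
noncomputable def maxoutLayer {n m k : ℕ} (hk : 0 < k)
    (f : Fin m → Fin k → ((Fin n → ℝ) →ᵃ[ℝ] ℝ)) : (Fin n → ℝ) → (Fin m → ℝ) :=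
  fun x j => Finset.univ.sup' (Finset.univ_nonempty_iff.mpr ⟨⟨0, hk⟩⟩) fun i => f j i x

open Module MeasureTheory

section SignPatterns

variable {ι V : Type*} [Fintype ι] [AddCommGroup V] [Module ℝ V]

noncomputable def signPatterns (g : ι → V →ᵃ[ℝ] ℝ) : Finset (Finset ι) :=
  (Set.range fun x => ({l | 0 < g l x} : Finset ι)).toFinite.toFinset

lemma mem_signPatterns {g : ι → V →ᵃ[ℝ] ℝ} {s : Finset ι} :
    s ∈ signPatterns g ↔ ∃ x, ({l | 0 < g l x} : Finset ι) = s := by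
  simp [signPatterns]

lemma mul_sub_pos_of_pos_iff {a b c : ℝ} (ha : 0 < a ↔ 0 < c) (hb : 0 < b ↔ c < 0)
    (hc : c ≠ 0) : 0 < c * (a - b) := by
  rcases hc.lt_or_gt with hc | hc
  · exact mul_pos_of_neg_of_neg hc (by linarith [hb.2 hc, not_lt.1 (mt ha.1 hc.not_gt)])
  · exact mul_pos hc (by linarith [ha.2 hc, not_lt.1 (mt hb.1 hc.not_gt)])

/-- A relation `∑ c l • (g l).linear = 0` with `c ≠ 0` on `s` makes the patterns `{c > 0}` and
`{c < 0}` incompatible: at points `x`, `y` realising them, every term of the vanishing sum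
`∑ c l * (g l x - g l y)` would be nonnegative and one of them positive. -/
lemma card_le_finrank_of_shatters [DecidableEq ι] [FiniteDimensional ℝ V] {g : ι → V →ᵃ[ℝ] ℝ}
    {s : Finset ι} (hs : (signPatterns g).Shatters s) : #s ≤ finrank ℝ V := by
  by_contra! hlt
  have hdep : ¬ LinearIndepOn ℝ (fun l => (g l).linear) (s : Set ι) := fun hli => by
    have := hli.fintype_card_le_finrank
    simp only [Finset.coe_sort_coe, Fintype.card_coe, Subspace.dual_finrank_eq] at this
    omega
  obtain ⟨c, hsum, i, his, hci⟩ : ∃ c : ι → ℝ, ∑ l ∈ s, c l • (g l).linear = 0 ∧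
      ∃ i ∈ s, c i ≠ 0 := by
    simpa [linearIndepOn_finset_iff] using hdep
  obtain ⟨_, hx, hxs⟩ := hs (filter_subset (fun l => 0 < c l) s)
  obtain ⟨_, hy, hys⟩ := hs (filter_subset (fun l => c l < 0) s)
  obtain ⟨x, rfl⟩ := mem_signPatterns.1 hx
  obtain ⟨y, rfl⟩ := mem_signPatterns.1 hy
  have hterm : ∀ l ∈ s, c l ≠ 0 → 0 < c l * (g l x - g l y) := fun l hl =>
    mul_sub_pos_of_pos_iff (by simpa [hl] using Finset.ext_iff.1 hxs l)
      (by simpa [hl] using Finset.ext_iff.1 hys l)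
  have hzero : ∑ l ∈ s, c l * (g l x - g l y) = 0 := by
    have := congrArg (fun φ => φ (x -ᵥ y)) hsum
    simp only [LinearMap.sum_apply, LinearMap.smul_apply, AffineMap.linearMap_vsub, smul_eq_mul,
      LinearMap.zero_apply] at this
    simpa only [vsub_eq_sub] using this
  refine (Finset.sum_pos' (fun l hl => ?_) ⟨i, his, hterm i his hci⟩).ne' hzero
  by_cases hcl : c l = 0
  · simp [hcl]
  · exact (hterm l hl hcl).le

lemma card_signPatterns_le [FiniteDimensional ℝ V] (g : ι → V →ᵃ[ℝ] ℝ) :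
    #(signPatterns g) ≤ ∑ j ∈ range (finrank ℝ V + 1), (Fintype.card ι).choose j := by
  classical
  have hvc : (signPatterns g).vcDim ≤ finrank ℝ V :=
    Finset.sup_le fun s hs => card_le_finrank_of_shatters (mem_shatterer.1 hs)
  calc #(signPatterns g) ≤ #(signPatterns g).shatterer := card_le_card_shatterer _
    _ ≤ ∑ j ∈ Iic (signPatterns g).vcDim, (Fintype.card ι).choose j :=
      card_shatterer_le_sum_vcDim
    _ ≤ _ := by
      rw [Nat.range_succ_eq_Iic]
      exact sum_le_sum_of_subset (Iic_subset_Iic.2 hvc)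

def signCell (g : ι → V →ᵃ[ℝ] ℝ) (s : Finset ι) : Set V :=
  {x | ({l | 0 < g l x} : Finset ι) = s}

lemma convex_signCell (g : ι → V →ᵃ[ℝ] ℝ) (s : Finset ι) : Convex ℝ (signCell g s) := by
  have hcell : signCell g s = ⋂ l, {x | 0 < g l x ↔ l ∈ s} := by
    ext x
    simp [signCell, Finset.ext_iff]
  rw [hcell]
  refine convex_iInter fun l => ?_
  by_cases hl : l ∈ s
  · simp only [hl, iff_true]
    exact (convex_Ioi 0).affine_preimage (g l)
  · simp only [hl, iff_false, not_lt]
    exact (convex_Iic 0).affine_preimage (g l)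

lemma iUnion_signCell (g : ι → V →ᵃ[ℝ] ℝ) : ⋃ s, signCell g s = Set.univ :=
  Set.eq_univ_of_forall fun _ => Set.mem_iUnion.2 ⟨_, rfl⟩

lemma setOf_signCell_nonempty (g : ι → V →ᵃ[ℝ] ℝ) :
    {s | (signCell g s).Nonempty} = signPatterns g := by
  ext s
  simp [mem_signPatterns, signCell, Set.Nonempty]

end SignPatterns

/-- Frontiers of convex sets are Haar-null, so an open set missing every interior would be null. -/
lemma IsOpen.exists_inter_interior_nonempty_of_subset_iUnion {E ι : Type*}
    [NormedAddCommGroup E] [NormedSpace ℝ E] [FiniteDimensional ℝ E] [Finite ι]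
    {U : Set E} {C : ι → Set E} (hU : IsOpen U) (hne : U.Nonempty) (hC : ∀ i, Convex ℝ (C i))
    (hcover : U ⊆ ⋃ i, C i) : ∃ i, (U ∩ interior (C i)).Nonempty := by
  borelize E
  by_contra! h
  have hfrontier : U ⊆ ⋃ i, frontier (C i) := fun x hx => by
    obtain ⟨i, hi⟩ := Set.mem_iUnion.1 (hcover hx)
    exact Set.mem_iUnion.2 ⟨i, subset_closure hi, fun hint => (h i).subset ⟨hx, hint⟩⟩
  have hnull : Measure.addHaar (⋃ i, frontier (C i)) = 0 :=
    measure_iUnion_null fun i => (hC i).addHaar_frontier _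
  exact (hU.measure_pos Measure.addHaar hne).ne' (measure_mono_null hfrontier hnull)

section LinearRegions

variable {n m : ℕ} {F : (Fin n → ℝ) → (Fin m → ℝ)} {R U : Set (Fin n → ℝ)}

lemma affineOn_iff_exists_eqOn :
    AffineOn F R ↔ ∃ G : (Fin n → ℝ) →ᵃ[ℝ] (Fin m → ℝ), Set.EqOn F G R := by
  constructor
  · rintro ⟨A, c, h⟩
    exact ⟨A.toAffineMap + AffineMap.const ℝ _ c, fun x hx => by simpa using h x hx⟩
  · rintro ⟨G, h⟩
    exact ⟨G.linear, G 0, fun x hx => by simpa [h hx] using G.map_vadd 0 x⟩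

lemma AffineOn.mono (h : AffineOn F U) (hRU : R ⊆ U) : AffineOn F R :=
  let ⟨A, c, hA⟩ := h
  ⟨A, c, fun x hx => hA x (hRU hx)⟩

lemma AffineOn.union (hR : AffineOn F R) (hU : AffineOn F U) (hRo : IsOpen R) (hUo : IsOpen U)
    (hRU : (R ∩ U).Nonempty) : AffineOn F (R ∪ U) := by
  obtain ⟨G, hG⟩ := affineOn_iff_exists_eqOn.1 hR
  obtain ⟨H, hH⟩ := affineOn_iff_exists_eqOn.1 hU
  have hGH : G = H := AffineMap.ext_on ((hRo.inter hUo).affineSpan_eq_top hRU)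
    fun x hx => (hG hx.1).symm.trans (hH hx.2)
  refine affineOn_iff_exists_eqOn.2 ⟨G, fun x hx => ?_⟩
  rcases hx with hx | hx
  · exact hG hx
  · rw [hGH]; exact hH hx

lemma IsLinearRegion.subset_of_inter_nonempty (hR : IsLinearRegion F R) (hUo : IsOpen U)
    (hUc : IsConnected U) (hU : AffineOn F U) (hRU : (R ∩ U).Nonempty) : U ⊆ R := by
  have hunion := hR.2.2.2 (R ∪ U) Set.subset_union_left (hR.1.union hUo)
    (hR.2.1.union hRU hUc) (hR.2.2.1.union hU hR.1 hUo hRU)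
  exact hunion ▸ Set.subset_union_right

lemma IsLinearRegion.eq_of_inter_nonempty {R' : Set (Fin n → ℝ)} (hR : IsLinearRegion F R)
    (hR' : IsLinearRegion F R') (h : (R ∩ R').Nonempty) : R = R' :=
  (hR'.subset_of_inter_nonempty hR.1 hR.2.1 hR.2.2.1 (Set.inter_comm _ _ ▸ h)).antisymm
    (hR.subset_of_inter_nonempty hR'.1 hR'.2.1 hR'.2.2.1 h)

theorem linearRegions_finite_and_ncard_le {ι : Type*} [Finite ι] (C : ι → Set (Fin n → ℝ))
    (hC : ∀ σ, Convex ℝ (C σ)) (hF : ∀ σ, AffineOn F (C σ)) (hcover : ⋃ σ, C σ = Set.univ) :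
    {R | IsLinearRegion F R}.Finite ∧
      {R | IsLinearRegion F R}.ncard ≤ {σ | (C σ).Nonempty}.ncard := by
  have : Nonempty ι :=
    let ⟨σ, _⟩ := Set.mem_iUnion.1 (hcover ▸ Set.mem_univ (0 : Fin n → ℝ)); ⟨σ⟩
  choose! φ hφ using fun R (hR : IsLinearRegion F R) =>
    hR.1.exists_inter_interior_nonempty_of_subset_iUnion hR.2.1.1 hC (hcover ▸ Set.subset_univ R)
  have hsub : ∀ R, IsLinearRegion F R → interior (C (φ R)) ⊆ R := fun R hR =>
    hR.subset_of_inter_nonempty isOpen_interior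
      ⟨(hφ R hR).mono Set.inter_subset_right, (hC _).interior.isPreconnected⟩
      ((hF _).mono interior_subset) (hφ R hR)
  have hinj : Set.InjOn φ {R | IsLinearRegion F R} := fun R hR R' hR' heq => by
    obtain ⟨x, -, hx⟩ := hφ R hR
    exact hR.eq_of_inter_nonempty hR' ⟨x, hsub R hR hx, hsub R' hR' (heq ▸ hx)⟩
  have hmaps : Set.MapsTo φ {R | IsLinearRegion F R} {σ | (C σ).Nonempty} := fun R hR =>
    (hφ R hR).mono (Set.inter_subset_right.trans interior_subset)
  exact ⟨Set.Finite.of_finite_image (Set.toFinite _) hinj,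
    Set.ncard_le_ncard_of_injOn φ hmaps hinj (Set.toFinite _)⟩

end LinearRegions

section Maxout

variable {n m k : ℕ} (f : Fin m → Fin k → ((Fin n → ℝ) →ᵃ[ℝ] ℝ))

def argmaxSet (i : Fin m → Fin k) : Set (Fin n → ℝ) :=
  {x | ∀ j b, f j b x ≤ f j (i j) x}

lemma convex_argmaxSet (i : Fin m → Fin k) : Convex ℝ (argmaxSet f i) := by
  have hset : argmaxSet f i = ⋂ j, ⋂ b, (f j b - f j (i j)) ⁻¹' Set.Iic 0 := by
    ext x
    simp [argmaxSet]
  rw [hset]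
  exact convex_iInter fun j => convex_iInter fun b => (convex_Iic 0).affine_preimage _

lemma iUnion_argmaxSet (hk : 0 < k) : ⋃ i, argmaxSet f i = Set.univ := by
  refine Set.eq_univ_of_forall fun x => Set.mem_iUnion.2 ?_
  have hne : (univ : Finset (Fin k)).Nonempty := univ_nonempty_iff.2 ⟨⟨0, hk⟩⟩
  choose i _ hi using fun j => exists_max_image univ (fun b => f j b x) hne
  exact ⟨i, fun j b => hi j b (mem_univ b)⟩

lemma maxoutLayer_eq_of_mem_argmaxSet (hk : 0 < k) {i : Fin m → Fin k} {x : Fin n → ℝ}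
    (hx : x ∈ argmaxSet f i) : maxoutLayer hk f x = AffineMap.pi (fun j => f j (i j)) x :=
  funext fun j =>
    le_antisymm (sup'_le _ _ fun b _ => hx j b) (le_sup' (fun b => f j b x) (mem_univ (i j)))

lemma affineOn_argmaxSet (hk : 0 < k) (i : Fin m → Fin k) :
    AffineOn (maxoutLayer hk f) (argmaxSet f i) :=
  affineOn_iff_exists_eqOn.2 ⟨_, fun _ hx => maxoutLayer_eq_of_mem_argmaxSet f hk hx⟩

def preactDiff : Fin m × Fin k × Fin k → (Fin n → ℝ) →ᵃ[ℝ] ℝ :=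
  fun p => f p.1 p.2.1 - f p.1 p.2.2

/-- The signs of the differences determine which pre-activations of each unit are maximal, so an
argmax at one point of a cell is an argmax on the whole cell. -/
lemma exists_signCell_subset_argmaxSet (hk : 0 < k) (s : Finset (Fin m × Fin k × Fin k)) :
    ∃ i, signCell (preactDiff f) s ⊆ argmaxSet f i := by
  rcases (signCell (preactDiff f) s).eq_empty_or_nonempty with hempty | ⟨x₀, hx₀⟩
  · exact ⟨fun _ => ⟨0, hk⟩, hempty ▸ Set.empty_subset _⟩
  obtain ⟨i, hi⟩ := Set.mem_iUnion.1 (iUnion_argmaxSet f hk ▸ Set.mem_univ x₀)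
  refine ⟨i, fun x hx j b => ?_⟩
  have hsign := Finset.ext_iff.1 (hx.trans hx₀.symm) (j, b, i j)
  simp only [preactDiff, mem_filter, mem_univ, true_and, AffineMap.coe_sub, Pi.sub_apply,
    sub_pos] at hsign
  exact not_lt.1 fun hlt => (hi j b).not_gt (hsign.1 hlt)

lemma affineOn_signCell (hk : 0 < k) (s : Finset (Fin m × Fin k × Fin k)) :
    AffineOn (maxoutLayer hk f) (signCell (preactDiff f) s) :=
  let ⟨i, hi⟩ := exists_signCell_subset_argmaxSet f hk s
  (affineOn_argmaxSet f hk i).mono hi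

end Maxout

/-- A single maxout layer with `n` inputs and `m` rank-`k` maxout units computes functions
with at most `min { ∑_{j=0}^n C(k²m, j), k^m }` linear regions. -/
theorem maxout_layer_upper_bound (n m k : ℕ) (hk : 0 < k)
    (f : Fin m → Fin k → ((Fin n → ℝ) →ᵃ[ℝ] ℝ)) :
    {R | IsLinearRegion (maxoutLayer hk f) R}.Finite ∧
    {R | IsLinearRegion (maxoutLayer hk f) R}.ncard ≤
      min (∑ j ∈ range (n + 1), (k ^ 2 * m).choose j) (k ^ m) := by
  have hcells := linearRegions_finite_and_ncard_le (signCell (preactDiff f))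
    (convex_signCell _) (affineOn_signCell f hk) (iUnion_signCell _)
  have hargmax := linearRegions_finite_and_ncard_le (argmaxSet f) (convex_argmaxSet f)
    (affineOn_argmaxSet f hk) (iUnion_argmaxSet f hk)
  refine ⟨hargmax.1, le_min (hcells.2.trans ?_) (hargmax.2.trans ?_)⟩
  · rw [setOf_signCell_nonempty, Set.ncard_coe_finset]
    have hcard : Fintype.card (Fin m × Fin k × Fin k) = k ^ 2 * m := by
      simp only [Fintype.card_prod, Fintype.card_fin]; ring
    simpa only [finrank_fin_fun, hcard] using card_signPatterns_le (preactDiff f)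
  · simpa using Set.ncard_le_card {i | (argmaxSet f i).Nonempty}
end

section
/- For m ≤ n, there exist parameters for a single maxout layer with n inputs and m rank-k maxout units such that the computed function has exactly k^m linear regions. Specifically, if unit j has pre-activations f_{j,1}(x) = 0, f_{j,i}(x) = (i-1)·x_j - binom-type bias chosen so that the linear-region boundaries of unit j are the parallel hyperplanes {x : x_j = 1}, ..., {x : x_j = k-1}, then the intersections of the units' regions give k^m full-dimensional regions. -/
/-!
Unit `j` of the layer computes `max_{s<k} (s·x_j - s(s+1)/2)`, a convex function of the single
coordinate `x_j` whose consecutive pieces meet exactly at `x_j = 1, …, k-1`. Off these hyperplanes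
the layer is affine on each open box cut out by them, and there are `k^m` such boxes. Conversely, a
connected open set on which the layer is affine cannot contain a point of a hyperplane
`x_j = i`, because along the `j`-th coordinate direction the unit has a strict convex kink there;
so its `j`-th coordinate projection is an interval avoiding the kinks, hence lies in one slope
interval, and the set lies in one box. Maximality then identifies linear regions with boxes.
-/

open Set Filter Topology

theorem AffineOn.map_add_add_map_sub {n m : ℕ} {F : (Fin n → ℝ) → (Fin m → ℝ)}
    {R : Set (Fin n → ℝ)} (hF : AffineOn F R) {y v : Fin n → ℝ} (hy : y ∈ R)
    (hp : y + v ∈ R) (hm : y - v ∈ R) : F (y + v) + F (y - v) = F y + F y := by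
  obtain ⟨A, c, hA⟩ := hF
  rw [hA _ hp, hA _ hm, hA _ hy, map_add, map_sub]
  abel

theorem IsOpen.exists_pos_add_smul_mem_and_sub_smul_mem {E : Type*} [TopologicalSpace E]
    [AddCommGroup E] [IsTopologicalAddGroup E] [Module ℝ E] [ContinuousSMul ℝ E] {R : Set E}
    (hR : IsOpen R) {y : E} (hy : y ∈ R) (v : E) :
    ∃ δ : ℝ, 0 < δ ∧ y + δ • v ∈ R ∧ y - δ • v ∈ R := by
  have hplus : Tendsto (fun δ : ℝ => y + δ • v) (𝓝 0) (𝓝 y) := by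
    simpa using (by fun_prop : Continuous fun δ : ℝ => y + δ • v).tendsto 0
  have hminus : Tendsto (fun δ : ℝ => y - δ • v) (𝓝 0) (𝓝 y) := by
    simpa using (by fun_prop : Continuous fun δ : ℝ => y - δ • v).tendsto 0
  have hnear : ∀ᶠ δ in 𝓝 (0 : ℝ), y + δ • v ∈ R ∧ y - δ • v ∈ R :=
    (hplus.eventually_mem (hR.mem_nhds hy)).and (hminus.eventually_mem (hR.mem_nhds hy))
  exact (((hnear.filter_mono nhdsWithin_le_nhds).and self_mem_nhdsWithin).exists
    (f := 𝓝[>] (0 : ℝ))).imp fun δ hδ => ⟨hδ.2, hδ.1.1, hδ.1.2⟩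

namespace Maxout

/-- The bias `s(s+1)/2` makes the pieces of slopes `s - 1` and `s` cross exactly at `t = s`. -/
noncomputable def piece (s : ℕ) (t : ℝ) : ℝ := s * t - s * (s + 1) / 2

theorem piece_le_piece {j s : ℕ} {t : ℝ} (hlt : j < s → (s : ℝ) ≤ t)
    (hgt : s < j → t ≤ s + 1) : piece j t ≤ piece s t := by
  unfold piece
  rcases lt_trichotomy j s with h | rfl | h
  · have hjs : (j : ℝ) + 1 ≤ s := by exact_mod_cast h
    nlinarith [mul_nonneg (by linarith : (0 : ℝ) ≤ s - j)
      (by linarith [hlt h] : (0 : ℝ) ≤ t - (s + j + 1) / 2)]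
  · exact le_rfl
  · have hsj : (s : ℝ) + 1 ≤ j := by exact_mod_cast h
    nlinarith [mul_nonneg (by linarith : (0 : ℝ) ≤ j - s)
      (by linarith [hgt h] : (0 : ℝ) ≤ (s + j + 1) / 2 - t)]

/-- The open interval `(s, s + 1)` on which the slope `s` is active, unbounded to the left for
`s = 0` and to the right for `s = k - 1`. -/
def slopeInterval (k s : ℕ) : Set ℝ := {t | (s = 0 ∨ (s : ℝ) < t) ∧ (s + 1 = k ∨ t < s + 1)}

theorem isOpen_slopeInterval (k s : ℕ) : IsOpen (slopeInterval k s) :=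
  (isOpen_const.union isOpen_Ioi).inter (isOpen_const.union isOpen_Iio)

theorem ordConnected_slopeInterval (k s : ℕ) : (slopeInterval k s).OrdConnected :=
  ⟨fun _ ha _ hb _ ht => ⟨ha.1.imp_right fun h => h.trans_le ht.1,
    hb.2.imp_right fun h => ht.2.trans_lt h⟩⟩

theorem add_half_mem_slopeInterval_iff {k s s' : ℕ} (hs : s < k) :
    (s : ℝ) + 1 / 2 ∈ slopeInterval k s' ↔ s' = s := by
  constructor
  · rintro ⟨h₁, h₂⟩
    have h₁' : s' ≤ s := by
      rcases h₁ with h | h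
      · omega
      · exact Nat.lt_succ_iff.mp (by exact_mod_cast (show (s' : ℝ) < s + 1 by linarith))
    have h₂' : s ≤ s' := by
      rcases h₂ with h | h
      · omega
      · exact Nat.lt_succ_iff.mp (by exact_mod_cast (show (s : ℝ) < s' + 1 by linarith))
    omega
  · rintro rfl
    exact ⟨Or.inr (by linarith), Or.inr (by linarith)⟩

theorem exists_mem_slopeInterval {k : ℕ} (hk : 0 < k) {t : ℝ}
    (ht : ∀ i : ℕ, 0 < i → i < k → t ≠ i) :
    ∃ s : Fin k, t ∈ slopeInterval k s := by
  refine ⟨⟨min ⌊t⌋₊ (k - 1), by omega⟩, ?_, ?_⟩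
  · by_cases h0 : min ⌊t⌋₊ (k - 1) = 0
    · exact Or.inl h0
    · have hfloor : (↑(min ⌊t⌋₊ (k - 1)) : ℝ) ≤ t :=
        (Nat.cast_le.mpr (min_le_left _ _)).trans (Nat.floor_le (by
          by_contra hneg; simp [Nat.floor_of_nonpos (le_of_not_ge hneg)] at h0))
      exact Or.inr (hfloor.lt_of_ne (ht _ (by omega) (by omega)).symm)
  · rcases min_choice ⌊t⌋₊ (k - 1) with h | h <;> simp only [h]
    · exact Or.inr (Nat.lt_floor_add_one t)
    · exact Or.inl (by omega)

theorem subset_slopeInterval {k : ℕ} {S : Set ℝ} (hS : S.OrdConnected)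
    (hkink : ∀ i : ℕ, 0 < i → i < k → (i : ℝ) ∉ S) {s : ℕ} (hs : s < k)
    (hmeet : (S ∩ slopeInterval k s).Nonempty) : S ⊆ slopeInterval k s := by
  obtain ⟨a, haS, ha₁, ha₂⟩ := hmeet
  intro b hb
  constructor
  · by_contra! h
    have has : (s : ℝ) < a := ha₁.resolve_left h.1
    exact hkink s (by omega) hs (hS.out hb haS ⟨h.2, has.le⟩)
  · by_contra! h
    have has : a < (s : ℝ) + 1 := ha₂.resolve_left h.1
    exact hkink (s + 1) (by omega) (by omega) (hS.out haS hb ⟨by push_cast; exact has.le,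
      by push_cast; exact h.2⟩)

noncomputable def ramp {k : ℕ} (hk : 0 < k) (t : ℝ) : ℝ :=
  Finset.univ.sup' (Finset.univ_nonempty_iff.mpr ⟨⟨0, hk⟩⟩) fun i : Fin k => piece i t

variable {k : ℕ} (hk : 0 < k)

theorem piece_le_ramp {s : ℕ} (hs : s < k) (t : ℝ) : piece s t ≤ ramp hk t :=
  Finset.le_sup' (fun i : Fin k => piece i t) (Finset.mem_univ ⟨s, hs⟩)

theorem ramp_eq_piece {s : ℕ} (hs : s < k) {t : ℝ} (h : ∀ j : Fin k, piece j t ≤ piece s t) :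
    ramp hk t = piece s t :=
  le_antisymm (Finset.sup'_le _ _ fun j _ => h j) (piece_le_ramp hk hs t)

theorem ramp_natCast {s : ℕ} (hs : s < k) : ramp hk s = piece s s :=
  ramp_eq_piece hk hs fun _ => piece_le_piece (fun _ => le_rfl) fun _ => by linarith

theorem two_mul_ramp_lt {i : ℕ} (hi : 0 < i) (hik : i < k) {δ : ℝ} (hδ : 0 < δ) :
    2 * ramp hk i < ramp hk (i + δ) + ramp hk (i - δ) := by
  obtain ⟨j, rfl⟩ : ∃ j, i = j + 1 := ⟨i - 1, by omega⟩
  calc 2 * ramp hk ↑(j + 1) = piece (j + 1) (↑(j + 1) + δ) + piece j (↑(j + 1) - δ) - δ := by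
        rw [ramp_natCast hk hik]; unfold piece; push_cast; ring
    _ < ramp hk (↑(j + 1) + δ) + ramp hk (↑(j + 1) - δ) := by
        linarith [piece_le_ramp hk hik (↑(j + 1) + δ), piece_le_ramp hk (by omega : j < k)
          (↑(j + 1) - δ)]

theorem ramp_eq_of_mem_slopeInterval {s : ℕ} (hs : s < k) {t : ℝ} (ht : t ∈ slopeInterval k s) :
    ramp hk t = piece s t :=
  ramp_eq_piece hk hs fun j => piece_le_piece
    (fun h => (ht.1.resolve_left (by omega)).le) (fun h => (ht.2.resolve_left (by omega)).le)

variable {n m : ℕ} (hmn : m ≤ n)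

noncomputable def params : Fin m → Fin k → ((Fin n → ℝ) →ᵃ[ℝ] ℝ) := fun j i =>
  (i : ℝ) • (LinearMap.proj (Fin.castLE hmn j) : (Fin n → ℝ) →ₗ[ℝ] ℝ).toAffineMap +
    AffineMap.const ℝ (Fin n → ℝ) (-((i : ℝ) * (i + 1) / 2))

theorem maxoutLayer_params_apply (x : Fin n → ℝ) (j : Fin m) :
    maxoutLayer hk (params hmn) x j = ramp hk (x (Fin.castLE hmn j)) :=
  Finset.sup'_congr _ rfl fun i _ => by simp [params, piece, sub_eq_add_neg]

theorem coord_ne_of_affineOn {R : Set (Fin n → ℝ)} (hR : IsOpen R)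
    (hRa : AffineOn (maxoutLayer hk (params hmn)) R) {z : Fin n → ℝ} (hz : z ∈ R) (j : Fin m)
    {i : ℕ} (hi : 0 < i) (hik : i < k) : z (Fin.castLE hmn j) ≠ i := by
  intro hzi
  obtain ⟨δ, hδ, hp, hm⟩ :=
    hR.exists_pos_add_smul_mem_and_sub_smul_mem hz (Pi.single (Fin.castLE hmn j) 1)
  have hsum := congrFun (hRa.map_add_add_map_sub hz hp hm) j
  simp only [Pi.add_apply, maxoutLayer_params_apply, Pi.sub_apply, Pi.smul_apply, Pi.single_eq_same,
    smul_eq_mul, mul_one, hzi] at hsum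
  linarith [two_mul_ramp_lt hk hi hik hδ]

def box (v : Fin m → Fin k) : Set (Fin n → ℝ) :=
  {x | ∀ j, x (Fin.castLE hmn j) ∈ slopeInterval k (v j)}

theorem isOpen_box (v : Fin m → Fin k) : IsOpen (box hmn v) := by
  simp only [box, ofPred_forall]
  exact isOpen_iInter_of_finite fun j => (isOpen_slopeInterval k _).preimage (continuous_apply _)

theorem convex_box (v : Fin m → Fin k) : Convex ℝ (box hmn v) := by
  simp only [box, ofPred_forall]
  exact convex_iInter fun j => (ordConnected_slopeInterval k _).convex.linear_preimage
    (LinearMap.proj (R := ℝ) (φ := fun _ : Fin n => ℝ) (Fin.castLE hmn j))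

theorem extend_mem_box (v : Fin m → Fin k) :
    Function.extend (Fin.castLE hmn) (fun j => ((v j : ℕ) : ℝ) + 1 / 2) 0 ∈ box hmn v := fun j => by
  rw [(Fin.castLE_injective hmn).extend_apply]
  exact (add_half_mem_slopeInterval_iff (v j).isLt).mpr rfl

theorem box_injective : Function.Injective (box (k := k) hmn) := fun v v' h => by
  funext j
  have := (h ▸ extend_mem_box hmn v) j
  rw [(Fin.castLE_injective hmn).extend_apply, add_half_mem_slopeInterval_iff (v j).isLt] at this
  exact (Fin.ext this).symm

theorem isConnected_box (v : Fin m → Fin k) : IsConnected (box hmn v) :=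
  ⟨⟨_, extend_mem_box hmn v⟩, (convex_box hmn v).isPreconnected⟩

theorem affineOn_box (v : Fin m → Fin k) :
    AffineOn (maxoutLayer hk (params hmn)) (box hmn v) :=
  ⟨LinearMap.pi fun j => ((v j : ℕ) : ℝ) • LinearMap.proj (Fin.castLE hmn j),
    fun j => -(((v j : ℕ) : ℝ) * (v j + 1) / 2), fun x hx => funext fun j => by
      rw [maxoutLayer_params_apply, ramp_eq_of_mem_slopeInterval hk (v j).isLt (hx j)]
      simp [piece, sub_eq_add_neg]⟩

theorem subset_box {R : Set (Fin n → ℝ)} (hR : IsOpen R) (hRc : IsConnected R)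
    (hRa : AffineOn (maxoutLayer hk (params hmn)) R) {v : Fin m → Fin k}
    (hmeet : (R ∩ box hmn v).Nonempty) : R ⊆ box hmn v := by
  obtain ⟨x, hxR, hxv⟩ := hmeet
  intro y hy j
  have hS := (hRc.isPreconnected.image _
    (continuous_apply (Fin.castLE hmn j)).continuousOn).ordConnected
  refine subset_slopeInterval hS ?_ (v j).isLt ⟨_, mem_image_of_mem _ hxR, hxv j⟩
    (mem_image_of_mem _ hy)
  rintro i hi hik ⟨z, hz, hzi⟩
  exact coord_ne_of_affineOn hk hmn hR hRa hz j hi hik hzi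

theorem isLinearRegion_box (v : Fin m → Fin k) :
    IsLinearRegion (maxoutLayer hk (params hmn)) (box hmn v) :=
  ⟨isOpen_box hmn v, isConnected_box hmn v, affineOn_box hk hmn v, fun _ hsub hR hRc hRa =>
    (subset_box hk hmn hR hRc hRa ((isConnected_box hmn v).nonempty.mono
      (subset_inter hsub subset_rfl))).antisymm hsub⟩

theorem setOf_isLinearRegion :
    {R | IsLinearRegion (maxoutLayer hk (params hmn)) R} = range (box (k := k) hmn) := by
  ext R
  refine ⟨fun ⟨hR, hRc, hRa, hmax⟩ => ?_, fun ⟨v, hv⟩ => hv ▸ isLinearRegion_box hk hmn v⟩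
  obtain ⟨x, hx⟩ := hRc.nonempty
  choose v hv using fun j => exists_mem_slopeInterval hk fun i hi hik =>
    coord_ne_of_affineOn hk hmn hR hRa hx j hi hik
  exact ⟨v, hmax _ (subset_box hk hmn hR hRc hRa ⟨x, hx, hv⟩) (isOpen_box hmn v)
    (isConnected_box hmn v) (affineOn_box hk hmn v)⟩

end Maxout

/-- For `m ≤ n` there are parameters for a single maxout layer with `n` inputs and `m`
rank-`k` maxout units such that the computed function has exactly `k^m` linear regions
(chosen so that the linear-region boundaries of unit `j` are the parallel hyperplanes
`{x : x_j = 1}, …, {x : x_j = k-1}`). -/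
theorem maxout_layer_km_regions (n m k : ℕ) (hk : 0 < k) (hmn : m ≤ n) :
    ∃ f : Fin m → Fin k → ((Fin n → ℝ) →ᵃ[ℝ] ℝ),
      {R | IsLinearRegion (maxoutLayer hk f) R}.Finite ∧
      {R | IsLinearRegion (maxoutLayer hk f) R}.ncard = k ^ m := by
  refine ⟨Maxout.params hmn, ?_, ?_⟩ <;> rw [Maxout.setOf_isLinearRegion hk hmn]
  · exact finite_range _
  · rw [ncard_range_of_injective (Maxout.box_injective hmn), Nat.card_fun]
    simp
end

section
/- The Catalan arrangement in ℝⁿ, consisting of the hyperplanes {x : x_i - x_j = s} for all 1 ≤ i < j ≤ n and s ∈ {-1, 0, 1}, has exactly n! · C_n regions, where C_n = (1/(n+1))·C(2n, n) is the n-th Catalan number. -/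
/-!
The regions of a finite arrangement of affine hyperplanes are its sign classes, which are open and
convex. For the Catalan arrangement, two points of the complement have the same signs exactly when
they satisfy the same relations `x i < x j` and `x i < x j + 1`. List the coordinates in increasing
order through a permutation `ρ`. Then this data is `ρ` together with a monotone map `r ≥ id`, where
`r a` is the largest index `b` whose coordinate lies below the `a`-th smallest coordinate plus `1`.
Each such pair comes from a point, built one coordinate at a time. Splitting `r` at its first fixed
point gives the Catalan recursion, so there are `n! * C_n` regions.
-/

theorem connectedComponentIn_setOf_forall_ne_zero {ι E : Type*} [AddCommGroup E] [Module ℝ E]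
    [TopologicalSpace E] [ContinuousAdd E] [ContinuousSMul ℝ E] {I : Set ι} (hI : I.Finite)
    (φ : ι → E →ᵃ[ℝ] ℝ) (hφ : ∀ a ∈ I, Continuous (φ a)) {x : E}
    (hx : x ∈ {y | ∀ a ∈ I, φ a y ≠ 0}) :
    connectedComponentIn {y | ∀ a ∈ I, φ a y ≠ 0} x = {y | ∀ a ∈ I, 0 < φ a x * φ a y} := by
  have hR : {y | ∀ a ∈ I, 0 < φ a x * φ a y} = ⋂ a ∈ I, {y | 0 < φ a x * φ a y} := by
    ext; simp
  have hxR : x ∈ {y | ∀ a ∈ I, 0 < φ a x * φ a y} := fun a ha => mul_self_pos.2 (hx a ha)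
  refine Set.Subset.antisymm ?_ (Convex.isPreconnected ?_ |>.subset_connectedComponentIn hxR
    fun y hy a ha => right_ne_zero_of_mul (hy a ha).ne')
  · -- the sign class of `x` and the set where a sign flips are open and cover the complement
    have hR_open : IsOpen {y | ∀ a ∈ I, 0 < φ a x * φ a y} := hR ▸
      hI.isOpen_biInter fun a ha => isOpen_lt continuous_const (continuous_const.mul (hφ a ha))
    have hV_open : IsOpen (⋃ a ∈ I, {y | φ a x * φ a y < 0}) :=
      isOpen_biUnion fun a ha => isOpen_lt (continuous_const.mul (hφ a ha)) continuous_const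
    refine isPreconnected_connectedComponentIn.subset_left_of_subset_union hR_open hV_open ?_ ?_
      ⟨x, mem_connectedComponentIn hx, hxR⟩
    · refine Set.disjoint_left.2 fun y hyR hyV => ?_
      obtain ⟨a, ha, hy⟩ := Set.mem_iUnion₂.1 hyV
      exact (hyR a ha).not_gt hy
    · intro y hy
      have hyU := connectedComponentIn_subset _ _ hy
      by_cases hsign : ∀ a ∈ I, 0 < φ a x * φ a y
      · exact Or.inl hsign
      · push Not at hsign
        obtain ⟨a, ha, hle⟩ := hsign
        exact Or.inr (Set.mem_iUnion₂.2 ⟨a, ha, hle.lt_of_ne (mul_ne_zero (hx a ha) (hyU a ha))⟩)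
  · rw [hR]
    refine convex_iInter₂ fun a _ => ?_
    convert (convex_Ioi (0 : ℝ)).affine_preimage (φ a x • φ a) using 1
    · rfl
    · ext; simp

/-- Extending by the identity beyond `n` lets these maps be cut and glued without `Fin` casts. -/
structure IsCatalanMap (n : ℕ) (r : ℕ → ℕ) : Prop where
  monotone : Monotone r
  le_apply : ∀ i, i ≤ r i
  apply_lt : ∀ i < n, r i < n
  apply_eq : ∀ i, n ≤ i → r i = i

namespace IsCatalanMap

variable {n k : ℕ} {r g h : ℕ → ℕ}

instance (n : ℕ) : Finite {r // IsCatalanMap n r} :=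
  Finite.of_injective (fun (r : {r // IsCatalanMap n r}) (i : Fin n) =>
      (⟨r.1 i, r.2.apply_lt i i.2⟩ : Fin n))
    fun r r' hrr' => Subtype.ext <| funext fun i => by
      by_cases hi : i < n
      · simpa using congrFun hrr' ⟨i, hi⟩
      · rw [r.2.apply_eq i (not_lt.1 hi), r'.2.apply_eq i (not_lt.1 hi)]

lemma card_zero : Nat.card {r // IsCatalanMap 0 r} = 1 :=
  Nat.card_eq_one_iff_exists.2 ⟨⟨id, monotone_id, fun _ => le_rfl, by simp, fun _ _ => rfl⟩,
    fun r => Subtype.ext (funext fun i => r.2.apply_eq i (Nat.zero_le i))⟩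

def lowerPart (k : ℕ) (r : ℕ → ℕ) : ℕ → ℕ := fun i => if i < k then r i - 1 else i

def upperPart (k : ℕ) (r : ℕ → ℕ) : ℕ → ℕ := fun i => r (k + 1 + i) - (k + 1)

def glue (k : ℕ) (g h : ℕ → ℕ) : ℕ → ℕ := fun i =>
  if i < k then g i + 1 else if i = k then k else h (i - (k + 1)) + (k + 1)

lemma isCatalanMap_lowerPart (hr : IsCatalanMap n r) (hk : r k = k) (hlt : ∀ i < k, i < r i) :
    IsCatalanMap k (lowerPart k r) := by
  have hle : ∀ i < k, r i ≤ k := fun i hi => hk ▸ hr.monotone hi.le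
  refine ⟨monotone_nat_of_le_succ fun i => ?_, fun i => ?_, fun i hi => ?_, fun i hi => ?_⟩
  all_goals simp only [lowerPart]; split_ifs
  all_goals have := hr.monotone (Nat.le_add_right i 1); have := hle i; have := hlt i; omega

lemma isCatalanMap_upperPart (hr : IsCatalanMap (n + 1) r) (hkn : k ≤ n) :
    IsCatalanMap (n - k) (upperPart k r) := by
  refine ⟨fun i j hij => Nat.sub_le_sub_right (hr.monotone (by omega)) _, fun i => ?_,
    fun i hi => ?_, fun i hi => ?_⟩ <;> simp only [upperPart]
  · have := hr.le_apply (k + 1 + i); omega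
  · have := hr.apply_lt (k + 1 + i) (by omega); omega
  · rw [hr.apply_eq _ (by omega)]; omega

lemma isCatalanMap_glue (hg : IsCatalanMap k g) (hh : IsCatalanMap (n - k) h) (hkn : k ≤ n) :
    IsCatalanMap (n + 1) (glue k g h) := by
  refine ⟨monotone_nat_of_le_succ fun i => ?_, fun i => ?_, fun i hi => ?_, fun i hi => ?_⟩
  all_goals simp only [glue]; split_ifs
  all_goals
    have := hg.monotone (Nat.le_add_right i 1); have := hg.le_apply i; have := hg.apply_lt i
    have := hh.monotone (show i - (k + 1) ≤ i + 1 - (k + 1) by omega)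
    have := hh.le_apply (i - (k + 1)); have := hh.apply_lt (i - (k + 1))
    have := hh.apply_eq (i - (k + 1))
    omega

lemma glue_apply_self : glue k g h k = k := by simp [glue]

lemma lt_glue_apply (hg : IsCatalanMap k g) {i : ℕ} (hi : i < k) : i < glue k g h i := by
  simp only [glue, if_pos hi]; have := hg.le_apply i; omega

lemma glue_lowerPart_upperPart (hr : IsCatalanMap n r) (hk : r k = k) (hlt : ∀ i < k, i < r i) :
    glue k (lowerPart k r) (upperPart k r) = r := by
  funext i
  simp only [glue, lowerPart, upperPart]
  split_ifs with hik hik'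
  · have := hlt i hik; omega
  · exact hik' ▸ hk.symm
  · rw [show k + 1 + (i - (k + 1)) = i by omega]
    have := hr.le_apply i; omega

lemma lowerPart_glue (hg : IsCatalanMap k g) : lowerPart k (glue k g h) = g := by
  funext i
  simp only [glue, lowerPart]
  split_ifs <;> first | omega | exact (hg.apply_eq i (by omega)).symm

lemma upperPart_glue : upperPart k (glue k g h) = h := by
  funext i
  simp [glue, upperPart, show ¬k + 1 + i < k by omega, show k + 1 + i ≠ k by omega]

/-- The first-return decomposition of Dyck paths. -/
def splitEquiv (hkn : k ≤ n) :
    {r // IsCatalanMap (n + 1) r ∧ r k = k ∧ ∀ i < k, i < r i} ≃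
      {g // IsCatalanMap k g} × {h // IsCatalanMap (n - k) h} where
  toFun r := (⟨lowerPart k r, isCatalanMap_lowerPart r.2.1 r.2.2.1 r.2.2.2⟩,
    ⟨upperPart k r, isCatalanMap_upperPart r.2.1 hkn⟩)
  invFun p := ⟨glue k p.1 p.2, isCatalanMap_glue p.1.2 p.2.2 hkn, glue_apply_self,
    fun _ hi => lt_glue_apply p.1.2 hi⟩
  left_inv r := Subtype.ext (glue_lowerPart_upperPart r.2.1 r.2.2.1 r.2.2.2)
  right_inv p := Prod.ext (Subtype.ext (lowerPart_glue p.1.2)) (Subtype.ext upperPart_glue)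

noncomputable def sigmaFirstFixedPointEquiv (n : ℕ) :
    (Σ k : Fin (n + 1), {r // IsCatalanMap (n + 1) r ∧ r k = k ∧ ∀ i < (k : ℕ), i < r i}) ≃
      {r // IsCatalanMap (n + 1) r} := by
  refine Equiv.ofBijective (fun p => ⟨p.2.1, p.2.2.1⟩) ⟨?_, fun r => ?_⟩
  · rintro ⟨k, r, hr, hk, hlt⟩ ⟨k', r', hr', hk', hlt'⟩ h
    obtain rfl : r = r' := congrArg Subtype.val h
    obtain rfl : k = k' := by
      rcases lt_trichotomy k k' with hkk | hkk | hkk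
      · exact absurd hk (hlt' k hkk).ne'
      · exact hkk
      · exact absurd hk' (hlt k' hkk).ne'
    rfl
  · have hn : r.1 n = n :=
      le_antisymm (Nat.lt_succ_iff.1 (r.2.apply_lt n n.lt_succ_self)) (r.2.le_apply n)
    have hfix : ∃ k, r.1 k = k := ⟨n, hn⟩
    have := Nat.find_min' hfix hn
    exact ⟨⟨⟨Nat.find hfix, by omega⟩, r.1, r.2, Nat.find_spec hfix, fun i hi =>
      (r.2.le_apply i).lt_of_ne' (Nat.find_min hfix hi)⟩, rfl⟩

end IsCatalanMap

theorem card_isCatalanMap (n : ℕ) : Nat.card {r // IsCatalanMap n r} = catalan n := by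
  induction n using Nat.strong_induction_on with
  | _ n ih =>
    cases n with
    | zero => rw [IsCatalanMap.card_zero, catalan_zero]
    | succ n =>
      have (k : Fin (n + 1)) :=
        Finite.of_equiv _ (IsCatalanMap.splitEquiv (Nat.lt_succ_iff.1 k.2)).symm
      rw [← Nat.card_congr (IsCatalanMap.sigmaFirstFixedPointEquiv n), Nat.card_sigma,
        catalan_succ]
      refine Finset.sum_congr rfl fun k _ => ?_
      rw [Nat.card_congr (IsCatalanMap.splitEquiv (Nat.lt_succ_iff.1 k.2)), Nat.card_prod,
        ih k k.2, ih (n - k) (by omega)]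

/-- `y (j + 1)` must lie above `y j` and `y (m - 1) + 1` but below `y m + 1`, where `m` is the
first index whose reach covers `j + 1`; if there is none, it goes beyond `y j + 1`. -/
noncomputable def seqOfReach (r : ℕ → ℕ) : ℕ → ℝ
  | 0 => 0
  | j + 1 =>
    if h : j + 1 ≤ r j then
      let m := Nat.find (⟨j, h⟩ : ∃ i, j + 1 ≤ r i)
      let lo := if m = 0 then seqOfReach r j else max (seqOfReach r j) (seqOfReach r (m - 1) + 1)
      (lo + (seqOfReach r m + 1)) / 2
    else seqOfReach r j + 2
  termination_by j => j
  decreasing_by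
    all_goals first | omega | have := Nat.find_min' (⟨j, h⟩ : ∃ i, j + 1 ≤ r i) h; omega

section seqOfReach

variable {r : ℕ → ℕ}

def PlacedByReach (r : ℕ → ℕ) (y : ℕ → ℝ) (a b : ℕ) : Prop :=
  y a < y b ∧ (b ≤ r a → y b < y a + 1) ∧ (r a < b → y a + 1 < y b)

lemma placedByReach_succ (hr : Monotone r) {j : ℕ}
    (ih : ∀ b ≤ j, ∀ a < b, PlacedByReach r (seqOfReach r) a b) :
    ∀ a ≤ j, PlacedByReach r (seqOfReach r) a (j + 1) := by
  set y := seqOfReach r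
  have hmono : ∀ a b, a ≤ b → b ≤ j → y a ≤ y b := fun a b hab hbj =>
    hab.eq_or_lt.elim (fun h => h ▸ le_rfl) fun h => (ih b hbj a h).1.le
  intro a haj
  by_cases h : j + 1 ≤ r j
  · set m := Nat.find (⟨j, h⟩ : ∃ i, j + 1 ≤ r i)
    have hm_reach : j + 1 ≤ r m := Nat.find_spec (⟨j, h⟩ : ∃ i, j + 1 ≤ r i)
    have hmj : m ≤ j := Nat.find_min' _ h
    set lo := if m = 0 then y j else max (y j) (y (m - 1) + 1)
    have hy : y (j + 1) = (lo + (y m + 1)) / 2 := by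
      change seqOfReach r (j + 1) = _; rw [seqOfReach.eq_2, dif_pos h]
    have hj_lo : y j ≤ lo := by simp only [lo]; split_ifs <;> simp
    have hlo : lo < y m + 1 := by
      have hj : y j < y m + 1 := hmj.eq_or_lt.elim (fun h => h ▸ by linarith)
        fun hlt => (ih j le_rfl m hlt).2.1 (by omega)
      simp only [lo]
      split_ifs with hm0
      · exact hj
      · exact max_lt hj (by linarith [(ih m hmj (m - 1) (by omega)).1])
    refine ⟨by linarith [hmono a j haj le_rfl], fun hreach => ?_, fun hreach => ?_⟩
    · have : m ≤ a := Nat.find_min' _ hreach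
      linarith [hmono m a this haj]
    · have ham : a < m := by
        by_contra! hma
        have := hr hma
        omega
      have : y (m - 1) + 1 ≤ lo := by simp [lo, show m ≠ 0 by omega]
      linarith [hmono a (m - 1) (by omega) (by omega)]
  · have hy : y (j + 1) = y j + 2 := by
      change seqOfReach r (j + 1) = _; rw [seqOfReach.eq_2, dif_neg h]
    have := hmono a j haj le_rfl
    exact ⟨by linarith, fun hreach => absurd (hreach.trans (hr haj)) h, fun _ => by linarith⟩

lemma placedByReach_seqOfReach (hr : Monotone r) {a b : ℕ} (hab : a < b) :
    PlacedByReach r (seqOfReach r) a b := by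
  induction b using Nat.strong_induction_on generalizing a with
  | _ b ih =>
    cases b with
    | zero => omega
    | succ j => exact placedByReach_succ hr (fun b hb a hab => ih b (by omega) hab) a (by omega)

theorem strictMono_seqOfReach (hr : Monotone r) : StrictMono (seqOfReach r) :=
  fun _ _ hab => (placedByReach_seqOfReach hr hab).1

theorem seqOfReach_lt_add_one_iff (hr : Monotone r) (hr' : ∀ i, i ≤ r i) (a b : ℕ) :
    seqOfReach r b < seqOfReach r a + 1 ↔ b ≤ r a := by
  rcases le_or_gt b a with hba | hab
  · have := (strictMono_seqOfReach hr).monotone hba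
    exact ⟨fun _ => hba.trans (hr' a), fun _ => by linarith⟩
  · obtain ⟨-, hle, hlt⟩ := placedByReach_seqOfReach hr hab
    exact ⟨fun h => not_lt.1 fun h' => (hlt h').not_gt h, hle⟩

theorem seqOfReach_ne_add_one (hr : Monotone r) (a b : ℕ) :
    seqOfReach r b ≠ seqOfReach r a + 1 := by
  rcases le_or_gt b a with hba | hab
  · have := (strictMono_seqOfReach hr).monotone hba
    linarith
  · obtain ⟨-, hle, hlt⟩ := placedByReach_seqOfReach hr hab
    rcases le_or_gt b (r a) with h | h
    · exact (hle h).ne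
    · exact (hlt h).ne'

end seqOfReach

lemma mul_pos_of_neg_iff_neg {α : Type*} [Ring α] [LinearOrder α] [IsStrictOrderedRing α]
    {a b : α} (ha : a ≠ 0) (hb : b ≠ 0) (h : a < 0 ↔ b < 0) : 0 < a * b := by
  rcases ha.lt_or_gt with ha | ha
  · exact mul_pos_of_neg_of_neg ha (h.1 ha)
  · exact mul_pos ha (hb.lt_or_gt.resolve_left fun hb => (h.2 hb).not_gt ha)

section catalanComplement

variable {n : ℕ}

def catalanComplement (n : ℕ) : Set (Fin n → ℝ) :=
  {x | ∀ i j : Fin n, i < j → ∀ s ∈ ({-1, 0, 1} : Set ℝ), x i - x j ≠ s}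

def catalanForm (a : Fin n × Fin n × ℝ) : (Fin n → ℝ) →ᵃ[ℝ] ℝ :=
  (LinearMap.proj (R := ℝ) (φ := fun _ : Fin n => ℝ) a.1 - LinearMap.proj a.2.1).toAffineMap -
    AffineMap.const ℝ (Fin n → ℝ) a.2.2

lemma catalanForm_apply (a : Fin n × Fin n × ℝ) (x : Fin n → ℝ) :
    catalanForm a x = x a.1 - x a.2.1 - a.2.2 := by
  simp [catalanForm]

theorem connectedComponentIn_catalanComplement {x : Fin n → ℝ} (hx : x ∈ catalanComplement n) :
    connectedComponentIn (catalanComplement n) x = {y | ∀ i j : Fin n, i < j →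
      ∀ s ∈ ({-1, 0, 1} : Set ℝ), 0 < (x i - x j - s) * (y i - y j - s)} := by
  set I : Set (Fin n × Fin n × ℝ) := {a | a.1 < a.2.1 ∧ a.2.2 ∈ ({-1, 0, 1} : Set ℝ)}
  have hI : I.Finite := (Set.finite_univ.prod (Set.finite_univ.prod (Set.toFinite _))).subset
    fun a ha => ⟨trivial, trivial, ha.2⟩
  have hU : catalanComplement n = {y | ∀ a ∈ I, catalanForm a y ≠ 0} := by
    ext y
    simp only [catalanComplement, I, Set.mem_ofPred_eq, Prod.forall, and_imp, catalanForm_apply,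
      sub_ne_zero]
    exact ⟨fun h i j s hij hs => h i j hij s hs, fun h i j hij s hs => h i j s hij hs⟩
  rw [hU] at hx ⊢
  rw [connectedComponentIn_setOf_forall_ne_zero hI catalanForm
    (fun a _ => (catalanForm a).continuous_of_finiteDimensional) hx]
  ext y
  simp only [I, Set.mem_ofPred_eq, Prod.forall, and_imp, catalanForm_apply]
  exact ⟨fun h i j hij s hs => h i j s hij hs, fun h i j s hij hs => h i j hij s hs⟩

def SameUnitOrder (x y : Fin n → ℝ) : Prop :=
  ∀ i j, (x i < x j ↔ y i < y j) ∧ (x i < x j + 1 ↔ y i < y j + 1)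

theorem mem_connectedComponentIn_catalanComplement_iff {x y : Fin n → ℝ}
    (hx : x ∈ catalanComplement n) (hy : y ∈ catalanComplement n) :
    y ∈ connectedComponentIn (catalanComplement n) x ↔ SameUnitOrder x y := by
  rw [connectedComponentIn_catalanComplement hx]
  constructor
  · intro h i j
    rcases lt_trichotomy i j with hij | rfl | hij
    · have h0 := neg_iff_neg_of_mul_pos (h i j hij 0 (by simp))
      have h1 := neg_iff_neg_of_mul_pos (h i j hij 1 (by simp))
      rw [sub_zero, sub_zero, sub_neg, sub_neg] at h0
      rw [sub_neg, sub_lt_iff_lt_add', sub_neg, sub_lt_iff_lt_add'] at h1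
      exact ⟨h0, h1⟩
    · simp
    · have h0 := pos_iff_pos_of_mul_pos (h j i hij 0 (by simp))
      have h1 := pos_iff_pos_of_mul_pos (h j i hij (-1) (by simp))
      rw [sub_zero, sub_zero, sub_pos, sub_pos] at h0
      rw [sub_neg_eq_add, sub_add_eq_add_sub, sub_pos, sub_neg_eq_add, sub_add_eq_add_sub,
        sub_pos] at h1
      exact ⟨h0, h1⟩
  · intro h i j hij s hs
    have hxs := sub_ne_zero.2 (hx i j hij s hs)
    have hys := sub_ne_zero.2 (hy i j hij s hs)
    simp only [Set.mem_insert_iff, Set.mem_singleton_iff] at hs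
    rcases hs with rfl | rfl | rfl
    · rw [← neg_mul_neg]
      refine mul_pos_of_neg_iff_neg (neg_ne_zero.2 hxs) (neg_ne_zero.2 hys) ?_
      rw [neg_lt_zero, neg_lt_zero, sub_neg_eq_add, sub_add_eq_add_sub, sub_pos, sub_neg_eq_add,
        sub_add_eq_add_sub, sub_pos]
      exact (h j i).2
    · refine mul_pos_of_neg_iff_neg hxs hys ?_
      rw [sub_zero, sub_zero, sub_neg, sub_neg]
      exact (h i j).1
    · refine mul_pos_of_neg_iff_neg hxs hys ?_
      rw [sub_neg, sub_lt_iff_lt_add', sub_neg, sub_lt_iff_lt_add']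
      exact (h i j).2

lemma injective_of_mem_catalanComplement {x : Fin n → ℝ} (hx : x ∈ catalanComplement n) :
    Function.Injective x := by
  intro i j hij
  by_contra hne
  rcases lt_or_gt_of_ne hne with h | h
  · exact hx i j h 0 (by simp) (by rw [hij, sub_self])
  · exact hx j i h 0 (by simp) (by rw [hij, sub_self])

end catalanComplement

section catalanPoint

variable {n : ℕ} {r r' : ℕ → ℕ}

noncomputable def catalanPoint (ρ : Equiv.Perm (Fin n)) (r : ℕ → ℕ) : Fin n → ℝ :=
  fun i => seqOfReach r (ρ i)

theorem catalanPoint_mem (ρ : Equiv.Perm (Fin n)) (hr : IsCatalanMap n r) :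
    catalanPoint ρ r ∈ catalanComplement n := by
  intro i j hij s hs heq
  simp only [Set.mem_insert_iff, Set.mem_singleton_iff] at hs
  rcases hs with rfl | rfl | rfl
  · exact seqOfReach_ne_add_one hr.monotone (ρ i) (ρ j)
      (by simp only [catalanPoint] at heq; linarith)
  · have : (ρ i : ℕ) ≠ ρ j := Fin.val_injective.ne (ρ.injective.ne hij.ne)
    exact this ((strictMono_seqOfReach hr.monotone).injective (sub_eq_zero.1 heq))
  · exact seqOfReach_ne_add_one hr.monotone (ρ j) (ρ i)
      (by simp only [catalanPoint] at heq; linarith)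

theorem eq_of_sameUnitOrder_catalanPoint {ρ ρ' : Equiv.Perm (Fin n)} (hr : IsCatalanMap n r)
    (hr' : IsCatalanMap n r') (h : SameUnitOrder (catalanPoint ρ r) (catalanPoint ρ' r')) :
    ρ = ρ' ∧ r = r' := by
  have hlt : ∀ i j, ρ i < ρ j ↔ ρ' i < ρ' j := fun i j => by
    simpa [catalanPoint, (strictMono_seqOfReach hr.monotone).lt_iff_lt,
      (strictMono_seqOfReach hr'.monotone).lt_iff_lt] using (h i j).1
  have hρ : ρ = ρ' := by
    have hstrict : StrictMono (ρ.symm.trans ρ') := fun a b hab => by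
      simpa [hlt] using (hlt (ρ.symm a) (ρ.symm b)).1 (by simpa using hab)
    ext i
    simpa using congrArg Fin.val (hstrict.apply_eq (x := ρ i)).symm
  subst hρ
  have hle : ∀ a b : Fin n, (b : ℕ) ≤ r a ↔ (b : ℕ) ≤ r' a := fun a b => by
    simpa [catalanPoint, seqOfReach_lt_add_one_iff hr.monotone hr.le_apply,
      seqOfReach_lt_add_one_iff hr'.monotone hr'.le_apply] using (h (ρ.symm b) (ρ.symm a)).2
  refine ⟨rfl, funext fun a => ?_⟩
  by_cases ha : a < n
  · exact le_antisymm ((hle ⟨a, ha⟩ ⟨r a, hr.apply_lt a ha⟩).1 le_rfl)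
      ((hle ⟨a, ha⟩ ⟨r' a, hr'.apply_lt a ha⟩).2 le_rfl)
  · rw [hr.apply_eq a (not_lt.1 ha), hr'.apply_eq a (not_lt.1 ha)]

end catalanPoint

section countBelow

open Finset

variable {n : ℕ} (x : Fin n → ℝ)

noncomputable def countBelow (t : ℝ) : ℕ := #{j | x j < t}

lemma countBelow_mono : Monotone (countBelow x) := fun _ _ hst =>
  card_le_card fun _ => by simpa using fun hj => hj.trans_le hst

lemma countBelow_le (t : ℝ) : countBelow x t ≤ n :=
  (card_filter_le _ _).trans (card_fin n).le

lemma lt_iff_countBelow_lt (i : Fin n) (t : ℝ) :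
    x i < t ↔ countBelow x (x i) < countBelow x t := by
  refine ⟨fun hit => card_lt_card ⟨fun _ => by simpa using fun hj => hj.trans hit, fun hsub => ?_⟩,
    fun h => not_le.1 fun hti => h.not_ge (countBelow_mono x hti)⟩
  simpa using hsub (mem_filter.2 ⟨mem_univ i, hit⟩)

lemma countBelow_lt (i : Fin n) : countBelow x (x i) < n :=
  ((lt_iff_countBelow_lt x i _).1 (lt_add_one (x i))).trans_le (countBelow_le x _)

variable {x}

noncomputable def rankPerm (hx : Function.Injective x) : Equiv.Perm (Fin n) :=
  Equiv.ofBijective (fun i => ⟨countBelow x (x i), countBelow_lt x i⟩) <|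
    Finite.injective_iff_bijective.1 fun i j hij => hx <| by
      simp only [Fin.mk.injEq] at hij
      exact le_antisymm (not_lt.1 fun h => ((lt_iff_countBelow_lt x j _).1 h).ne' hij)
        (not_lt.1 fun h => ((lt_iff_countBelow_lt x i _).1 h).ne hij)

lemma rankPerm_apply (hx : Function.Injective x) (i : Fin n) :
    (rankPerm hx i : ℕ) = countBelow x (x i) := rfl

lemma countBelow_rankPerm_symm (hx : Function.Injective x) (a : Fin n) :
    countBelow x (x ((rankPerm hx).symm a)) = a := by
  rw [← rankPerm_apply hx, Equiv.apply_symm_apply]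

noncomputable def reachMap (hx : Function.Injective x) (a : ℕ) : ℕ :=
  if ha : a < n then countBelow x (x ((rankPerm hx).symm ⟨a, ha⟩) + 1) - 1 else a

lemma reachMap_rankPerm (hx : Function.Injective x) (i : Fin n) :
    reachMap hx (rankPerm hx i) = countBelow x (x i + 1) - 1 := by
  simp [reachMap]

theorem isCatalanMap_reachMap (hx : Function.Injective x) : IsCatalanMap n (reachMap hx) := by
  have hreach (a : Fin n) : a < countBelow x (x ((rankPerm hx).symm a) + 1) := by
    rw [← countBelow_rankPerm_symm hx a, ← lt_iff_countBelow_lt]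
    exact lt_add_one _
  refine ⟨fun a b hab => ?_, fun a => ?_, fun a ha => ?_, fun a ha => dif_neg (not_lt.2 ha)⟩
  · unfold reachMap
    split_ifs with ha hb hb
    · have hxab : x ((rankPerm hx).symm ⟨a, ha⟩) ≤ x ((rankPerm hx).symm ⟨b, hb⟩) := by
        refine not_lt.1 fun hlt => ?_
        rw [lt_iff_countBelow_lt, countBelow_rankPerm_symm, countBelow_rankPerm_symm] at hlt
        exact hab.not_gt hlt
      exact Nat.sub_le_sub_right (countBelow_mono x (by linarith)) 1
    · have := countBelow_le x (x ((rankPerm hx).symm ⟨a, ha⟩) + 1)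
      omega
    · omega
    · exact hab
  · unfold reachMap
    split_ifs with ha
    · have := hreach ⟨a, ha⟩
      simp only at this
      omega
    · exact le_rfl
  · have := hreach ⟨a, ha⟩
    have := countBelow_le x (x ((rankPerm hx).symm ⟨a, ha⟩) + 1)
    simp only [reachMap, dif_pos ha] at *
    omega

theorem sameUnitOrder_catalanPoint (hx : Function.Injective x) :
    SameUnitOrder x (catalanPoint (rankPerm hx) (reachMap hx)) := by
  have hr := isCatalanMap_reachMap hx
  intro i j
  have := (lt_iff_countBelow_lt x j (x j + 1)).1 (lt_add_one _)
  simp only [catalanPoint, (strictMono_seqOfReach hr.monotone).lt_iff_lt,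
    seqOfReach_lt_add_one_iff hr.monotone hr.le_apply]
  rw [reachMap_rankPerm, rankPerm_apply, rankPerm_apply]
  exact ⟨lt_iff_countBelow_lt x i _, (lt_iff_countBelow_lt x i _).trans (by omega)⟩

end countBelow

noncomputable def catalanRegion (n : ℕ) (ω : Equiv.Perm (Fin n) × {r // IsCatalanMap n r}) :
    Set (Fin n → ℝ) :=
  connectedComponentIn (catalanComplement n) (catalanPoint ω.1 ω.2)

theorem catalanRegion_injective (n : ℕ) : Function.Injective (catalanRegion n) := by
  rintro ⟨ρ, r, hr⟩ ⟨ρ', r', hr'⟩ h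
  have hmem : catalanPoint ρ' r' ∈ catalanRegion n (ρ, ⟨r, hr⟩) :=
    h ▸ mem_connectedComponentIn (catalanPoint_mem ρ' hr')
  obtain ⟨rfl, rfl⟩ := eq_of_sameUnitOrder_catalanPoint hr hr'
    ((mem_connectedComponentIn_catalanComplement_iff (catalanPoint_mem ρ hr)
      (catalanPoint_mem ρ' hr')).1 hmem)
  rfl

theorem range_catalanRegion (n : ℕ) : Set.range (catalanRegion n) =
    {C | ∃ x ∈ catalanComplement n, C = connectedComponentIn (catalanComplement n) x} := by
  ext C
  constructor
  · rintro ⟨⟨ρ, r, hr⟩, rfl⟩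
    exact ⟨_, catalanPoint_mem ρ hr, rfl⟩
  · rintro ⟨x, hx, rfl⟩
    have hinj := injective_of_mem_catalanComplement hx
    have hr := isCatalanMap_reachMap hinj
    refine ⟨(rankPerm hinj, ⟨reachMap hinj, hr⟩), (connectedComponentIn_eq ?_).symm⟩
    exact (mem_connectedComponentIn_catalanComplement_iff hx (catalanPoint_mem _ hr)).2
      (sameUnitOrder_catalanPoint hinj)

/-- The Catalan arrangement in `ℝⁿ`, with hyperplanes `{x : x_i - x_j = s}` for
`1 ≤ i < j ≤ n` and `s ∈ {-1, 0, 1}`, has exactly `n! · C_n` regions, where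
`C_n = C(2n, n)/(n+1)` is the `n`-th Catalan number. -/
theorem catalan_arrangement_regions (n : ℕ) :
    {C : Set (Fin n → ℝ) |
        ∃ x ∈ {x : Fin n → ℝ | ∀ i j : Fin n, i < j →
                  ∀ s ∈ ({-1, 0, 1} : Set ℝ), x i - x j ≠ s},
          C = connectedComponentIn
                {x : Fin n → ℝ | ∀ i j : Fin n, i < j →
                  ∀ s ∈ ({-1, 0, 1} : Set ℝ), x i - x j ≠ s} x}.ncard =
      Nat.factorial n * ((2 * n).choose n / (n + 1)) := by
  rw [← Nat.centralBinom_eq_two_mul_choose, ← catalan_eq_centralBinom_div]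
  change Set.ncard {C | ∃ x ∈ catalanComplement n,
    C = connectedComponentIn (catalanComplement n) x} = _
  rw [← range_catalanRegion, Set.ncard_range_of_injective (catalanRegion_injective n),
    Nat.card_prod, Nat.card_perm, Nat.card_fin, card_isCatalanMap]
end
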